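/- arXiv:1908.11192 — 10 statements merged into one kernel-verified Lean document; each statement's English description precedes it below -/
import Mathlib

section
/- Let j ≥ 2, s ≥ 1 and k ≥ 1 be integers and let a_{u,v} (u = 1,…,s; v = 1,…,j) be integers satisfying ∑_{u=1}^s a_{u,1}^r = ∑_{u=1}^s a_{u,2}^r = ⋯ = ∑_{u=1}^s a_{u,j}^r for every r = 1, 2, …, k. Let h_1, h_2, …, h_j be arbitrary integers, extended cyclically by h_m = h_{m−j} for m > j. For each v = 1,…,j define the family of t = j·s integers b^{(v)} consisting of a_{u,w} + h_{w+v−1} for u = 1,…,s and w = 1,…,j. Then ∑ over the t members of b^{(1)} of their r-th powers equals the corresponding sum for b^{(2)}, …, equals the corresponding sum for b^{(j)}, for every r = 1, 2, …, k+1. -/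
/-- **Lemma 5.** Let `a u w` (`u = 1,…,s`, `w = 1,…,j`) be a multigrade chain of
degree `k`, and let `h : Fin j → ℤ` be arbitrary integers (indices taken cyclically,
i.e. modulo `j`, which is the addition on `Fin j`). For each `v : Fin j`, the family
`b⁽ᵛ⁾` of `t = j * s` integers given by `a u w + h (w + v)` for `u : Fin s`,
`w : Fin j` forms a multigrade chain of degree `k + 1`: the sums of `r`-th powers of
the members of `b⁽ᵛ⁾` agree for all `v`, for every `r = 1, 2, …, k + 1`. -/
theorem multigrade_chain_degree_raising
    (j s k : ℕ) (hj : 2 ≤ j) (hs : 1 ≤ s) (hk : 1 ≤ k)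
    (a : Fin s → Fin j → ℤ)
    (ha : ∀ r : ℕ, 1 ≤ r → r ≤ k → ∀ v w : Fin j,
      ∑ u : Fin s, (a u v) ^ r = ∑ u : Fin s, (a u w) ^ r)
    (h : Fin j → ℤ) :
    ∀ r : ℕ, 1 ≤ r → r ≤ k + 1 → ∀ v v' : Fin j,
      ∑ w : Fin j, ∑ u : Fin s, (a u w + h (w + v)) ^ r
        = ∑ w : Fin j, ∑ u : Fin s, (a u w + h (w + v')) ^ r := by
  intro r hr hrk v v'
  haveI : NeZero j := ⟨by omega⟩
  have hshift : ∀ (f : Fin j → ℤ) (x : Fin j),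
      ∑ w : Fin j, f (w + x) = ∑ w : Fin j, f w := by
    intro f x
    exact Fintype.sum_equiv (Equiv.addRight x) _ _ (fun w => rfl)
  have key : ∀ x : Fin j,
      ∑ w : Fin j, ∑ u : Fin s, (a u w + h (w + x)) ^ r
        = ∑ i ∈ Finset.range (r + 1),
            ∑ w : Fin j,
              (∑ u : Fin s, (a u w) ^ i) * (h (w + x)) ^ (r - i) * (r.choose i : ℤ) := by
    intro x
    have inner : ∀ w : Fin j, ∑ u : Fin s, (a u w + h (w + x)) ^ r
        = ∑ i ∈ Finset.range (r + 1),
            (∑ u : Fin s, (a u w) ^ i) * (h (w + x)) ^ (r - i) * (r.choose i : ℤ) := by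
      intro w
      simp_rw [add_pow, Finset.sum_mul]
      rw [Finset.sum_comm]
    simp_rw [inner]
    rw [Finset.sum_comm]
  rw [key v, key v']
  refine Finset.sum_congr rfl fun i hi => ?_
  rw [Finset.mem_range] at hi
  rcases eq_or_lt_of_le (Nat.lt_succ_iff.mp hi) with hir | hir
  · subst hir
    simp
  · -- i < r, so r - i ≥ 1 and i ≤ k
    obtain ⟨c, hc⟩ : ∃ c : ℤ, ∀ w : Fin j, ∑ u : Fin s, (a u w) ^ i = c := by
      rcases Nat.eq_zero_or_pos i with h0 | h0
      · exact ⟨s, fun w => by simp [h0]⟩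
      · exact ⟨∑ u : Fin s, (a u ⟨0, by omega⟩) ^ i,
          fun w => ha i h0 (by omega) w ⟨0, by omega⟩⟩
    simp_rw [hc, mul_assoc, ← Finset.mul_sum, ← Finset.sum_mul]
    rw [hshift (fun y => h y ^ (r - i)) v, hshift (fun y => h y ^ (r - i)) v']
end

section
/- Let j ≥ 2 and k ≥ 1 be integers and set N = 2j^k. Then the first N consecutive positive integers 1, 2, …, N can be partitioned into j pairwise disjoint sets, each containing exactly 2j^{k−1} integers, such that for every exponent r = 1, 2, …, k the sum of the r-th powers of the members of each set is the same for all j sets. -/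
/-!
If the `j` colour classes of a colouring `c` of `{0, …, M - 1}` have equal power sums up to
degree `d`, colour `y + q * M` (`y < M`, `q < j`) by `c y + q mod j`. This gives `j` classes of
`{0, …, j * M - 1}` with equal power sums up to degree `d + 1`: by the binomial theorem, shifting
a class by `q * M` changes its `r`-th power sum by an amount that only depends on its lower power
sums, while the `r`-th power sums themselves, summed over `q`, run over all classes once.
Starting from the pairs `{x, 2j - 1 - x}` of `{0, …, 2j - 1}` (degree `1`), iterating `k - 1`
times and shifting everything by `1` (binomial theorem again) gives the partition.
-/

open Finset

namespace Finset

theorem sum_add_pow_sub_sum_add_pow {α R : Type*} [CommRing R] {s t : Finset α} {f : α → R}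
    (a : R) {r : ℕ} (h : ∀ i < r, ∑ x ∈ s, f x ^ i = ∑ x ∈ t, f x ^ i) :
    ∑ x ∈ s, (f x + a) ^ r - ∑ x ∈ t, (f x + a) ^ r =
      ∑ x ∈ s, f x ^ r - ∑ x ∈ t, f x ^ r := by
  have expand (u : Finset α) : ∑ x ∈ u, (f x + a) ^ r = ∑ x ∈ u, f x ^ r +
      ∑ i ∈ range r, (r.choose i : R) * a ^ (r - i) * ∑ x ∈ u, f x ^ i := by
    simp only [add_pow, sum_range_succ, Nat.sub_self, pow_zero, Nat.choose_self, Nat.cast_one,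
      mul_one, sum_add_distrib, mul_sum]
    rw [add_comm, sum_comm]
    congr 1
    refine sum_congr rfl fun i _ => sum_congr rfl fun x _ => ?_
    ring
  have lower : ∑ i ∈ range r, (r.choose i : R) * a ^ (r - i) * ∑ x ∈ s, f x ^ i =
      ∑ i ∈ range r, (r.choose i : R) * a ^ (r - i) * ∑ x ∈ t, f x ^ i :=
    sum_congr rfl fun i hi => by rw [h i (mem_range.mp hi)]
  rw [expand s, expand t, lower]
  ring

theorem sum_range_mul_eq_sum_fin {M : Type*} [AddCommMonoid M] (f : ℕ → M) (j n : ℕ) :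
    ∑ x ∈ range (j * n), f x = ∑ q : Fin j, ∑ y ∈ range n, f (y + n * q) := by
  rw [sum_range, ← finProdFinEquiv.sum_comp, Fintype.sum_prod_type]
  simp only [sum_range]
  rfl

end Finset

namespace Prouhet

variable {j : ℕ}

def colorClass (c : ℕ → Fin j) (M : ℕ) (v : Fin j) : Finset ℕ :=
  {x ∈ range M | c x = v}

def IsMultigradeColoring (c : ℕ → Fin j) (M d : ℕ) : Prop :=
  ∀ r ≤ d, ∀ v w : Fin j,
    ∑ x ∈ colorClass c M v, (x : ℤ) ^ r = ∑ x ∈ colorClass c M w, (x : ℤ) ^ r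

section Partition

variable {c : ℕ → Fin j} {M d : ℕ}

theorem IsMultigradeColoring.mul_card_colorClass (h : IsMultigradeColoring c M d) (v : Fin j) :
    j * #(colorClass c M v) = M := by
  have card_eq (w : Fin j) : #(colorClass c M w) = #(colorClass c M v) := by
    simpa using h 0 (Nat.zero_le d) w v
  calc j * #(colorClass c M v) = ∑ w : Fin j, #(colorClass c M w) := by simp [card_eq]
    _ = M := (card_eq_sum_card_fiberwise (by simp)).symm.trans (card_range M)

theorem IsMultigradeColoring.exists_partition_Icc (h : IsMultigradeColoring c M d) :
    ∃ A : Fin j → Finset ℤ,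
      (∀ v w : Fin j, v ≠ w → Disjoint (A v) (A w)) ∧
      (∀ v : Fin j, j * #(A v) = M) ∧
      univ.biUnion A = Icc 1 (M : ℤ) ∧
      ∀ r ≤ d, ∀ v w : Fin j, ∑ x ∈ A v, x ^ r = ∑ x ∈ A w, x ^ r := by
  let shift : ℕ ↪ ℤ := Nat.castEmbedding.trans (addRightEmbedding 1)
  refine ⟨fun v => (colorClass c M v).map shift, fun v w hvw => ?_, fun v => ?_, ?_,
    fun r hr v w => ?_⟩
  · rw [disjoint_map]
    exact disjoint_left.2 fun x hv hw => hvw ((mem_filter.1 hv).2.symm.trans (mem_filter.1 hw).2)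
  · rw [card_map, h.mul_card_colorClass]
  · ext z
    simp only [shift, colorClass, mem_biUnion, mem_univ, mem_map, mem_filter, mem_range,
      true_and, Function.Embedding.trans_apply, Nat.castEmbedding_apply, addRightEmbedding_apply,
      mem_Icc]
    constructor
    · rintro ⟨v, x, ⟨hx, -⟩, rfl⟩
      omega
    · rintro ⟨hz₁, hz₂⟩
      exact ⟨c (z - 1).toNat, (z - 1).toNat, ⟨by omega, rfl⟩, by omega⟩
  · have shift_sums := sum_add_pow_sub_sum_add_pow (s := colorClass c M v)
      (t := colorClass c M w) (f := Nat.cast) (r := r) (1 : ℤ) fun i hi => h i (by omega) v w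
    rw [h r hr v w, sub_self, sub_eq_zero] at shift_sums
    simp only [sum_map]
    exact shift_sums

end Partition

variable [NeZero j]

def blockColoring (M : ℕ) (c : ℕ → Fin j) (x : ℕ) : Fin j :=
  c (x % M) + Fin.ofNat j (x / M)

theorem sum_colorClass_blockColoring {β : Type*} [AddCommMonoid β] (g : ℕ → β) (M : ℕ)
    (c : ℕ → Fin j) (v : Fin j) :
    ∑ x ∈ colorClass (blockColoring M c) (j * M) v, g x =
      ∑ q : Fin j, ∑ y ∈ colorClass c M (v - q), g (y + M * q) := by
  simp only [colorClass, sum_filter, sum_range_mul_eq_sum_fin]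
  refine Fintype.sum_congr _ _ fun q => sum_congr rfl fun y hy => ?_
  have hy : y < M := mem_range.mp hy
  have hcolor : blockColoring M c (y + M * q) = c y + q := by
    rw [blockColoring, Nat.add_mul_mod_self_left, Nat.mod_eq_of_lt hy,
      Nat.add_mul_div_left _ _ (by omega), Nat.div_eq_of_lt hy, zero_add, Fin.ofNat_val_eq_self]
  simp only [hcolor, ← eq_sub_iff_add_eq]

theorem IsMultigradeColoring.blockColoring {c : ℕ → Fin j} {M d : ℕ}
    (h : IsMultigradeColoring c M d) :
    IsMultigradeColoring (blockColoring M c) (j * M) (d + 1) := by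
  intro r hr v w
  have shifted (q : Fin j) :
      ∑ y ∈ colorClass c M (v - q), ((y + M * q : ℕ) : ℤ) ^ r -
        ∑ y ∈ colorClass c M (w - q), ((y + M * q : ℕ) : ℤ) ^ r =
      ∑ y ∈ colorClass c M (v - q), (y : ℤ) ^ r - ∑ y ∈ colorClass c M (w - q), (y : ℤ) ^ r := by
    push_cast
    exact sum_add_pow_sub_sum_add_pow _ fun i hi => h i (by omega) _ _
  have reindex (u : Fin j) : ∑ q : Fin j, ∑ y ∈ colorClass c M (u - q), (y : ℤ) ^ r =
      ∑ u : Fin j, ∑ y ∈ colorClass c M u, (y : ℤ) ^ r :=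
    Fintype.sum_equiv (Equiv.subLeft u) _ _ fun _ => rfl
  rw [← sub_eq_zero, sum_colorClass_blockColoring, sum_colorClass_blockColoring,
    ← sum_sub_distrib, Fintype.sum_congr _ _ shifted, sum_sub_distrib, reindex, reindex, sub_self]

def pairColoring (j : ℕ) [NeZero j] (x : ℕ) : Fin j :=
  Fin.ofNat j (min x (2 * j - 1 - x))

theorem colorClass_pairColoring (v : Fin j) :
    colorClass (pairColoring j) (2 * j) v = {(v : ℕ), 2 * j - 1 - v} := by
  ext x
  simp only [colorClass, pairColoring, mem_filter, mem_range, mem_insert, mem_singleton,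
    Fin.ext_iff, Fin.val_ofNat]
  have := v.isLt
  by_cases hx : x < 2 * j
  · rw [Nat.mod_eq_of_lt (by omega)]
    omega
  · omega

theorem isMultigradeColoring_pairColoring : IsMultigradeColoring (pairColoring j) (2 * j) 1 := by
  intro r hr v w
  have pair_sum (u : Fin j) : ∑ x ∈ colorClass (pairColoring j) (2 * j) u, (x : ℤ) ^ r =
      (u : ℤ) ^ r + ((2 * j - 1 - u : ℕ) : ℤ) ^ r := by
    rw [colorClass_pairColoring, sum_pair (by omega)]
  rw [pair_sum, pair_sum]
  interval_cases r
  · simp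
  · simp only [pow_one]
    omega

def prouhetColoring (j : ℕ) [NeZero j] : ℕ → ℕ → Fin j
  | 0 => pairColoring j
  | n + 1 => blockColoring (2 * j ^ (n + 1)) (prouhetColoring j n)

theorem isMultigradeColoring_prouhetColoring (n : ℕ) :
    IsMultigradeColoring (prouhetColoring j n) (2 * j ^ (n + 1)) (n + 1) := by
  induction n with
  | zero => simpa [prouhetColoring] using isMultigradeColoring_pairColoring
  | succ n ih =>
    have h := ih.blockColoring
    rwa [show j * (2 * j ^ (n + 1)) = 2 * j ^ (n + 1 + 1) by ring] at h

end Prouhet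

open Prouhet in
/-- **Theorem 6 (existence part).** For integers `j ≥ 2` and `k ≥ 1`, with
`N = 2 * j ^ k`, the integers `1, 2, …, N` can be partitioned into `j` pairwise
disjoint sets of `2 * j ^ (k - 1)` integers each, such that for every exponent
`r = 1, …, k` the sums of the `r`-th powers of the members of the `j` sets all agree. -/
theorem first_two_j_pow_k_integers_multigrade_partition (j k : ℕ) (hj : 2 ≤ j) (hk : 1 ≤ k) :
    ∃ A : Fin j → Finset ℤ,
      (∀ v w : Fin j, v ≠ w → Disjoint (A v) (A w)) ∧
      (∀ v : Fin j, (A v).card = 2 * j ^ (k - 1)) ∧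
      (Finset.univ.biUnion A = Finset.Icc (1 : ℤ) (2 * (j : ℤ) ^ k)) ∧
      (∀ r : ℕ, 1 ≤ r → r ≤ k → ∀ v w : Fin j,
        ∑ x ∈ A v, x ^ r = ∑ x ∈ A w, x ^ r) := by
  have : NeZero j := ⟨by omega⟩
  obtain ⟨n, rfl⟩ : ∃ n, k = n + 1 := ⟨k - 1, by omega⟩
  obtain ⟨A, hdisj, hcard, hunion, hsums⟩ :=
    (isMultigradeColoring_prouhetColoring (j := j) n).exists_partition_Icc
  refine ⟨A, hdisj, fun v => ?_, ?_, fun r _ hr => hsums r hr⟩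
  · apply Nat.eq_of_mul_eq_mul_left (Nat.pos_of_neZero j)
    rw [hcard v, Nat.add_sub_cancel]
    ring
  · rw [hunion]
    push_cast
    rfl
end

section
/- Let j ≥ 2 and k ≥ 1 be integers and set N = 2j^k. Then there exist at least ((j−1)!)^{k−1} distinct partitions of {1, 2, …, N} into j pairwise disjoint sets of 2j^{k−1} integers each, such that in each partition, for every exponent r = 1, 2, …, k, the sum of the r-th powers of the members of each set is the same for all j sets. (Two partitions are distinct if they differ as unordered families of sets.) -/
namespace MGP
open Finset

variable (j : ℕ)

/-- Choice data at one level: a permutation of the nonzero elements of `ZMod j`. -/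
abbrev D := Equiv.Perm {x : ZMod j // x ≠ 0}

/-- Extend a permutation of nonzero elements to a permutation of `ZMod j` fixing `0`. -/
def fE (σ : D j) : Equiv.Perm (ZMod j) := Equiv.Perm.subtypeCongr σ (Equiv.refl _)

lemma fE_zero (σ : D j) : fE j σ 0 = 0 := by
  simp [fE, Equiv.Perm.subtypeCongr.apply]

lemma fE_apply_ne (σ : D j) (t : ZMod j) (h : t ≠ 0) :
    fE j σ t = (σ ⟨t, h⟩ : {x : ZMod j // x ≠ 0}) := by
  simp [fE, Equiv.Perm.subtypeCongr.apply, h]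

lemma fE_inj : Function.Injective (fE j) := by
  intro σ σ' h
  apply Equiv.ext
  rintro ⟨x, hx⟩
  have hx2 : fE j σ x = fE j σ' x := by rw [h]
  rw [fE_apply_ne j σ x hx, fE_apply_ne j σ' x hx] at hx2
  exact Subtype.ext hx2

/-- Base partition of `{1,…,2j}` into the `j` pairs `{i+1, 2j-i}`. -/
def base (i : ZMod j) : Finset ℤ := {(i.val + 1 : ℤ), (2 * j - i.val : ℤ)}

lemma base_ne [NeZero j] (hj : 2 ≤ j) (i : ZMod j) :
    (i.val + 1 : ℤ) ≠ (2 * j - i.val : ℤ) := by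
  have h1 : i.val < j := ZMod.val_lt i
  omega

lemma base_card [NeZero j] (hj : 2 ≤ j) (i : ZMod j) : (base j i).card = 2 :=
  Finset.card_pair (base_ne j hj i)

lemma base_subset [NeZero j] (hj : 2 ≤ j) (i : ZMod j) :
    base j i ⊆ Finset.Icc (1 : ℤ) (2 * j) := by
  have h1 : i.val < j := ZMod.val_lt i
  intro x hx
  simp only [base, mem_insert, mem_singleton] at hx
  rw [mem_Icc]
  rcases hx with h | h <;> omega

lemma base_union [NeZero j] (hj : 2 ≤ j) :
    (univ : Finset (ZMod j)).biUnion (base j) = Finset.Icc (1 : ℤ) (2 * j) := by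
  apply subset_antisymm
  · intro x hx
    rcases mem_biUnion.1 hx with ⟨i, -, hxi⟩
    exact base_subset j hj i hxi
  · intro x hx
    rw [mem_Icc] at hx
    by_cases hc : x ≤ j
    · refine mem_biUnion.2 ⟨((x - 1).toNat : ZMod j), mem_univ _, ?_⟩
      have hval : ((((x - 1).toNat : ℕ) : ZMod j)).val = (x - 1).toNat :=
        ZMod.val_cast_of_lt (by omega)
      simp only [base, mem_insert, mem_singleton, hval]
      left; omega
    · refine mem_biUnion.2 ⟨(((2 * j : ℤ) - x).toNat : ZMod j), mem_univ _, ?_⟩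
      have hval : (((((2 * j : ℤ) - x).toNat : ℕ) : ZMod j)).val = ((2 * j : ℤ) - x).toNat :=
        ZMod.val_cast_of_lt (by omega)
      simp only [base, mem_insert, mem_singleton, hval]
      right; omega

lemma base_disjoint [NeZero j] (hj : 2 ≤ j) {i i' : ZMod j} (h : i ≠ i') :
    Disjoint (base j i) (base j i') := by
  rw [Finset.disjoint_left]
  intro x hx hx'
  have h1 : i.val < j := ZMod.val_lt i
  have h2 : i'.val < j := ZMod.val_lt i'
  simp only [base, mem_insert, mem_singleton] at hx hx'
  have hval : i.val = i'.val := by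
    rcases hx with h3 | h3 <;> rcases hx' with h4 | h4 <;> omega
  exact h (ZMod.val_injective j hval)

lemma base_powersum [NeZero j] (hj : 2 ≤ j) (r : ℕ) (hr : r ≤ 1) (i i' : ZMod j) :
    ∑ x ∈ base j i, x ^ r = ∑ x ∈ base j i', x ^ r := by
  have key : ∀ i₀ : ZMod j, ∑ x ∈ base j i₀, x ^ r = if r = 0 then 2 else 2 * j + 1 := by
    intro i₀
    rw [base, Finset.sum_pair (base_ne j hj i₀)]
    interval_cases r
    · norm_num
    · norm_num; ring
  rw [key, key]

/-- The recursive multigrade partition construction. -/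
def build [NeZero j] : List (D j) → ZMod j → Finset ℤ
  | [], i => base j i
  | σ :: l, i => (univ : Finset (ZMod j)).biUnion (fun t =>
      (build l (i + fE j σ t)).image (fun a => a + (t.val : ℤ) * (2 * (j : ℤ) ^ (l.length + 1))))

/-- Two blocks with the same element have the same index. -/
lemma block_eq {N x : ℤ} {a b : ℕ} (hN : 0 < N) (h1 : a * N < x) (h2 : x ≤ a * N + N)
    (h3 : b * N < x) (h4 : x ≤ b * N + N) : a = b := by
  rcases lt_trichotomy a b with h | h | h
  · exfalso
    have hb : (a : ℤ) + 1 ≤ b := by exact_mod_cast h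
    nlinarith
  · exact h
  · exfalso
    have hb : (b : ℤ) + 1 ≤ a := by exact_mod_cast h
    nlinarith

lemma build_subset [NeZero j] (hj : 2 ≤ j) :
    ∀ (l : List (D j)) (i : ZMod j),
      build j l i ⊆ Finset.Icc (1 : ℤ) (2 * (j : ℤ) ^ (l.length + 1))
  | [], i => by
      intro x hx
      have h1 : i.val < j := ZMod.val_lt i
      simp only [build, base, mem_insert, mem_singleton] at hx
      simp only [List.length_nil, zero_add, pow_one, mem_Icc]
      rcases hx with h | h <;> omega
  | σ :: l, i => by
      intro x hx
      simp only [build, mem_biUnion, mem_image] at hx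
      obtain ⟨t, -, a, ha, rfl⟩ := hx
      have hsub := build_subset hj l (i + fE j σ t) ha
      rw [mem_Icc] at hsub ⊢
      set N : ℤ := 2 * (j : ℤ) ^ (l.length + 1) with hN
      have hNpos : 0 < N := by positivity
      have htv : (t.val : ℤ) ≤ (j : ℤ) - 1 := by
        have := ZMod.val_lt t; push_cast; omega
      have htv0 : (0 : ℤ) ≤ (t.val : ℤ) := by positivity
      constructor
      · nlinarith [hsub.1]
      · have hgoal : (2 : ℤ) * (j : ℤ) ^ (List.length (σ :: l) + 1) = (j : ℤ) * N := by
          rw [hN]; simp only [List.length_cons]; ring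
        rw [hgoal]
        nlinarith [hsub.2]

lemma build_blocks_disjoint [NeZero j] (hj : 2 ≤ j) (l : List (D j)) (g : ZMod j → ZMod j) :
    (↑(univ : Finset (ZMod j)) : Set (ZMod j)).PairwiseDisjoint (fun t : ZMod j =>
      (build j l (g t)).image (fun a => a + (t.val : ℤ) * (2 * (j : ℤ) ^ (l.length + 1)))) := by
  intro t _ t' _ htt'
  simp only [Function.onFun]
  rw [Finset.disjoint_left]
  intro x hx hx'
  obtain ⟨a, ha, rfl⟩ := mem_image.1 hx
  obtain ⟨a', ha', hxx⟩ := mem_image.1 hx'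
  have hs := build_subset j hj l (g t) ha
  have hs' := build_subset j hj l (g t') ha'
  rw [mem_Icc] at hs hs'
  set N : ℤ := 2 * (j : ℤ) ^ (l.length + 1) with hN
  have hNpos : 0 < N := by positivity
  have hv : t.val = t'.val := by
    apply block_eq hNpos (x := a + (t.val : ℤ) * N) (by nlinarith [hs.1]) (by nlinarith [hs.2])
    · nlinarith [hs'.1]
    · nlinarith [hs'.2]
  exact htt' (ZMod.val_injective j hv)

lemma build_card [NeZero j] (hj : 2 ≤ j) :
    ∀ (l : List (D j)) (i : ZMod j), (build j l i).card = 2 * j ^ l.length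
  | [], i => by
      have h1 : i.val < j := ZMod.val_lt i
      simp only [build, List.length_nil, pow_zero, mul_one]
      exact Finset.card_pair (by omega)
  | σ :: l, i => by
      simp only [build]
      rw [Finset.card_biUnion (fun t _ t' _ h => build_blocks_disjoint j hj l
        (fun u => i + fE j σ u) (mem_coe.2 (mem_univ t)) (mem_coe.2 (mem_univ t')) h)]
      have hterm : ∀ t : ZMod j,
          ((build j l (i + fE j σ t)).image
            (fun a => a + (t.val : ℤ) * (2 * (j : ℤ) ^ (l.length + 1)))).card = 2 * j ^ l.length := by
        intro t
        rw [Finset.card_image_of_injective _ (add_left_injective _)]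
        exact build_card hj l _
      rw [Finset.sum_congr rfl (fun t _ => hterm t), Finset.sum_const, Finset.card_univ,
        ZMod.card, smul_eq_mul, List.length_cons, pow_succ]
      ring

lemma build_disjoint [NeZero j] (hj : 2 ≤ j) :
    ∀ (l : List (D j)) {i i' : ZMod j}, i ≠ i' → Disjoint (build j l i) (build j l i')
  | [], i, i', h => base_disjoint j hj h
  | σ :: l, i, i', h => by
      rw [Finset.disjoint_left]
      intro x hx hx'
      simp only [build, mem_biUnion, mem_image] at hx hx'
      obtain ⟨t, -, a, ha, hax⟩ := hx
      obtain ⟨t', -, a', ha', hax'⟩ := hx'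
      have hs := build_subset j hj l _ ha
      have hs' := build_subset j hj l _ ha'
      rw [mem_Icc] at hs hs'
      set N : ℤ := 2 * (j : ℤ) ^ (l.length + 1) with hN
      have hNpos : 0 < N := by positivity
      have hv : t.val = t'.val :=
        block_eq hNpos (x := x) (by nlinarith [hs.1]) (by nlinarith [hs.2])
          (by nlinarith [hs'.1]) (by nlinarith [hs'.2])
      have ht : t = t' := ZMod.val_injective j hv
      subst ht
      have haa : a = a' := by rw [← hax] at hax'; linarith
      subst haa
      have hne : i + fE j σ t ≠ i' + fE j σ t := fun hc => h (by
        have := add_right_cancel hc; exact this)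
      exact Finset.disjoint_left.1 (build_disjoint hj l hne) ha ha'

lemma build_union [NeZero j] (hj : 2 ≤ j) :
    ∀ l : List (D j),
      (univ : Finset (ZMod j)).biUnion (build j l) = Finset.Icc (1 : ℤ) (2 * (j : ℤ) ^ (l.length + 1))
  | [] => by
      rw [show (build j [] : ZMod j → Finset ℤ) = base j from rfl]
      simpa only [List.length_nil, zero_add, pow_one] using base_union j hj
  | σ :: l => by
      apply subset_antisymm
      · intro x hx
        rcases mem_biUnion.1 hx with ⟨i, -, h⟩
        exact build_subset j hj _ i h
      · intro x hx
        rw [mem_Icc] at hx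
        set N : ℤ := 2 * (j : ℤ) ^ (l.length + 1) with hN
        have hNpos : 0 < N := by positivity
        obtain ⟨q, rem, hqr, hrem0, hrem1⟩ :
            ∃ q rem : ℤ, N * q + rem = x - 1 ∧ 0 ≤ rem ∧ rem < N :=
          ⟨(x - 1) / N, (x - 1) % N, Int.mul_ediv_add_emod _ _,
            Int.emod_nonneg _ (ne_of_gt hNpos), Int.emod_lt_of_pos _ hNpos⟩
        have hx1 : (1 : ℤ) ≤ x := hx.1
        have h6 : 2 * (j : ℤ) ^ (List.length (σ :: l) + 1) = (j : ℤ) * N := by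
          rw [hN]; simp only [List.length_cons]; ring
        have h5 : x ≤ (j : ℤ) * N := h6 ▸ hx.2
        have hq0 : 0 ≤ q := by
          by_contra hc
          push_neg at hc
          have hc1 : q + 1 ≤ 0 := hc
          nlinarith
        have hqj : q < (j : ℤ) := by
          by_contra hc
          push_neg at hc
          nlinarith
        set a : ℤ := rem + 1 with ha
        have haI : a ∈ Finset.Icc (1 : ℤ) N := by rw [mem_Icc]; omega
        rw [hN, ← build_union hj l, mem_biUnion] at haI
        obtain ⟨u, -, hu⟩ := haI
        set t : ZMod j := (q.toNat : ZMod j) with ht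
        have htv : (t.val : ℤ) = q := by
          rw [ht, ZMod.val_cast_of_lt (by omega)]; omega
        refine mem_biUnion.2 ⟨u - fE j σ t, mem_univ _, ?_⟩
        simp only [build, mem_biUnion, mem_image]
        refine ⟨t, mem_univ _, a, ?_, ?_⟩
        · rwa [sub_add_cancel]
        · rw [htv]
          have hcomm : q * (2 * (j : ℤ) ^ (l.length + 1)) = N * q := by rw [hN]; ring
          linarith

lemma build_powersum [NeZero j] (hj : 2 ≤ j) :
    ∀ (l : List (D j)) (r : ℕ), r ≤ l.length + 1 →
      ∀ i i' : ZMod j, ∑ x ∈ build j l i, x ^ r = ∑ x ∈ build j l i', x ^ r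
  | [], r, hr, i, i' => base_powersum j hj r (by simpa using hr) i i'
  | σ :: l, r, hr, i, i' => by
      have hr' : r ≤ l.length + 2 := by simpa using hr
      have key : ∀ i₀ : ZMod j, ∑ x ∈ build j (σ :: l) i₀, x ^ r =
          (∑ t : ZMod j, ∑ s ∈ Finset.range r,
            (∑ a ∈ build j l 0, a ^ s) *
              (((t.val : ℤ) * (2 * (j : ℤ) ^ (l.length + 1))) ^ (r - s) * (r.choose s : ℤ)))
          + ∑ u : ZMod j, ∑ a ∈ build j l u, a ^ r := by
        intro i₀
        simp only [build]
        rw [Finset.sum_biUnion (build_blocks_disjoint j hj l (fun u => i₀ + fE j σ u))]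
        have hterm : ∀ t : ZMod j,
            ∑ x ∈ (build j l (i₀ + fE j σ t)).image
              (fun a => a + (t.val : ℤ) * (2 * (j : ℤ) ^ (l.length + 1))), x ^ r
            = (∑ s ∈ Finset.range r,
                (∑ a ∈ build j l 0, a ^ s) *
                  (((t.val : ℤ) * (2 * (j : ℤ) ^ (l.length + 1))) ^ (r - s) * (r.choose s : ℤ)))
              + ∑ a ∈ build j l (i₀ + fE j σ t), a ^ r := by
          intro t
          set c : ℤ := (t.val : ℤ) * (2 * (j : ℤ) ^ (l.length + 1)) with hc
          rw [Finset.sum_image (fun a _ b _ h => add_left_injective _ h)]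
          have expand : ∀ a : ℤ, (a + c) ^ r =
              (∑ s ∈ Finset.range r, a ^ s * (c ^ (r - s) * (r.choose s : ℤ))) + a ^ r := by
            intro a
            rw [add_pow, Finset.sum_range_succ]
            simp only [Nat.choose_self, Nat.cast_one, Nat.sub_self, pow_zero, mul_one, mul_assoc]
          rw [Finset.sum_congr rfl (fun a _ => expand a), Finset.sum_add_distrib, Finset.sum_comm]
          congr 1
          apply Finset.sum_congr rfl
          intro s hs
          rw [← Finset.sum_mul]
          congr 1
          exact build_powersum hj l s (by have := Finset.mem_range.1 hs; omega) _ 0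
        
        rw [Finset.sum_congr rfl (fun t _ => hterm t), Finset.sum_add_distrib]
        congr 1
        have := Equiv.sum_comp ((fE j σ).trans (Equiv.addLeft i₀))
          (fun u => ∑ a ∈ build j l u, a ^ r)
        simpa using this
      rw [key, key]


lemma build_nonempty [NeZero j] (hj : 2 ≤ j) (l : List (D j)) (i : ZMod j) :
    (build j l i).Nonempty := by
  rw [← Finset.card_pos, build_card j hj]
  positivity

lemma build_injective [NeZero j] (hj : 2 ≤ j) (l : List (D j)) :
    Function.Injective (build j l) := by
  intro i i' h
  by_contra hne
  obtain ⟨x, hx⟩ := build_nonempty j hj l i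
  exact Finset.disjoint_left.1 (build_disjoint j hj l hne) hx (h ▸ hx)

lemma build_cons_block [NeZero j] (hj : 2 ≤ j) (σ : D j) (l : List (D j)) (i t : ZMod j) :
    build j (σ :: l) i ∩ Finset.Icc
        ((t.val : ℤ) * (2 * (j : ℤ) ^ (l.length + 1)) + 1)
        ((t.val : ℤ) * (2 * (j : ℤ) ^ (l.length + 1)) + 2 * (j : ℤ) ^ (l.length + 1))
      = (build j l (i + fE j σ t)).image
        (fun a => a + (t.val : ℤ) * (2 * (j : ℤ) ^ (l.length + 1))) := by
  set N : ℤ := 2 * (j : ℤ) ^ (l.length + 1) with hN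
  have hNpos : 0 < N := by positivity
  apply subset_antisymm
  · intro x hx
    rw [Finset.mem_inter] at hx
    obtain ⟨hx1, hx2⟩ := hx
    simp only [build, mem_biUnion, mem_image] at hx1
    obtain ⟨t', -, a, ha, rfl⟩ := hx1
    have hs := build_subset j hj l (i + fE j σ t') ha
    rw [mem_Icc] at hs hx2
    have hv : t'.val = t.val :=
      block_eq hNpos (x := a + (t'.val : ℤ) * N) (by nlinarith [hs.1]) (by nlinarith [hs.2])
        (by nlinarith [hx2.1]) (by nlinarith [hx2.2])
    have htt : t' = t := ZMod.val_injective j hv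
    subst htt
    exact mem_image.2 ⟨a, ha, rfl⟩
  · intro x hx
    rw [Finset.mem_inter]
    constructor
    · simp only [build, mem_biUnion]
      exact ⟨t, mem_univ _, hx⟩
    · obtain ⟨a, ha, rfl⟩ := mem_image.1 hx
      have hs := build_subset j hj l _ ha
      rw [mem_Icc] at hs ⊢
      constructor
      · nlinarith [hs.1]
      · nlinarith [hs.2]

lemma build_cons_restrict [NeZero j] (hj : 2 ≤ j) (σ : D j) (l : List (D j)) (i : ZMod j) :
    build j (σ :: l) i ∩ Finset.Icc (1 : ℤ) (2 * (j : ℤ) ^ (l.length + 1)) = build j l i := by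
  have h := build_cons_block j hj σ l i 0
  rw [ZMod.val_zero] at h
  simp only [Nat.cast_zero, zero_mul, zero_add, add_zero, fE_zero] at h
  rw [h]
  exact Finset.image_id'

lemma build_unordered_inj [NeZero j] (hj : 2 ≤ j) :
    ∀ l l' : List (D j), l.length = l'.length →
      (univ : Finset (ZMod j)).image (build j l) = univ.image (build j l') → l = l'
  | [], [], _, _ => rfl
  | [], σ' :: l', h, _ => by simp at h
  | σ :: l, [], h, _ => by simp at h
  | σ :: l, σ' :: l', hlen, himg => by
      have hlen' : l.length = l'.length := by simpa using hlen
      have h1 : (univ : Finset (ZMod j)).image (build j l) = univ.image (build j l') := by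
        have e1 : (univ.image (build j (σ :: l))).image
            (fun S => S ∩ Finset.Icc (1 : ℤ) (2 * (j : ℤ) ^ (l.length + 1)))
            = univ.image (build j l) := by
          rw [Finset.image_image]
          apply Finset.image_congr
          intro i _
          exact build_cons_restrict j hj σ l i
        have e2 : (univ.image (build j (σ' :: l'))).image
            (fun S => S ∩ Finset.Icc (1 : ℤ) (2 * (j : ℤ) ^ (l.length + 1)))
            = univ.image (build j l') := by
          rw [hlen', Finset.image_image]
          apply Finset.image_congr
          intro i _
          exact build_cons_restrict j hj σ' l' i
        rw [← e1, ← e2, himg]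
      have hll : l = l' := build_unordered_inj hj l l' hlen' h1
      subst hll
      have h2 : ∀ i : ZMod j, build j (σ :: l) i = build j (σ' :: l) i := by
        intro i
        have hmem : build j (σ :: l) i ∈ univ.image (build j (σ' :: l)) := by
          rw [← himg]
          exact mem_image_of_mem _ (mem_univ i)
        obtain ⟨i', -, hii⟩ := Finset.mem_image.1 hmem
        have hres : build j l i' = build j l i := by
          rw [← build_cons_restrict j hj σ' l i', ← build_cons_restrict j hj σ l i, hii]
        have : i' = i := build_injective j hj l hres
        subst this
        exact hii.symm
      have h3 : σ = σ' := by
        apply fE_inj j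
        apply Equiv.ext
        intro t
        have hb := build_cons_block j hj σ l 0 t
        have hb' := build_cons_block j hj σ' l 0 t
        rw [h2 0] at hb
        have himeq := hb.symm.trans hb'
        have heq := Finset.image_injective
          (add_left_injective ((t.val : ℤ) * (2 * (j : ℤ) ^ (l.length + 1)))) himeq
        have h4 := build_injective j hj l heq
        rwa [zero_add, zero_add] at h4
      rw [h3]


end MGP

/-- **Theorem 6.** For integers `j ≥ 2` and `k ≥ 1`, with `N = 2 * j ^ k`, there are at
least `((j-1)!)^(k-1)` distinct partitions (as unordered families of sets, encoded as a
`Finset` of partitions, each partition itself a `Finset` of `j` sets) of `{1, …, N}` into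
`j` pairwise disjoint sets of `2 * j ^ (k-1)` integers each, such that in each partition
the sums of the `r`-th powers of the members of the `j` sets agree for `r = 1, …, k`. -/
theorem first_two_j_pow_k_integers_multigrade_partition_count
    (j k : ℕ) (hj : 2 ≤ j) (hk : 1 ≤ k) :
    ∃ Ps : Finset (Finset (Finset ℤ)),
      (Nat.factorial (j - 1)) ^ (k - 1) ≤ Ps.card ∧
      ∀ P ∈ Ps,
        P.card = j ∧
        (∀ S ∈ P, ∀ T ∈ P, S ≠ T → Disjoint S T) ∧
        (∀ S ∈ P, S.card = 2 * j ^ (k - 1)) ∧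
        (P.biUnion id = Finset.Icc (1 : ℤ) (2 * (j : ℤ) ^ k)) ∧
        (∀ r : ℕ, 1 ≤ r → r ≤ k → ∀ S ∈ P, ∀ T ∈ P,
          ∑ x ∈ S, x ^ r = ∑ x ∈ T, x ^ r) := by
  haveI : NeZero j := ⟨by omega⟩
  classical
  open Finset in
  refine ⟨(univ : Finset (Fin (k - 1) → MGP.D j)).image
      (fun d => (univ : Finset (ZMod j)).image (MGP.build j (List.ofFn d))), ?_, ?_⟩
  · have hinj : Function.Injective
        (fun d : Fin (k - 1) → MGP.D j =>
          (univ : Finset (ZMod j)).image (MGP.build j (List.ofFn d))) := by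
      intro d d' h
      exact List.ofFn_injective (MGP.build_unordered_inj j hj _ _ (by simp) h)
    rw [Finset.card_image_of_injective _ hinj, Finset.card_univ, Fintype.card_fun,
      Fintype.card_perm, Fintype.card_fin]
    have hcard : Fintype.card {x : ZMod j // x ≠ 0} = j - 1 := by
      have h1 : Fintype.card {x : ZMod j // x ≠ 0}
          = Fintype.card (ZMod j) - Fintype.card {x : ZMod j // x = 0} :=
        Fintype.card_subtype_compl _
      rw [h1, ZMod.card, Fintype.card_subtype_eq]
    rw [hcard]
  · intro P hP
    obtain ⟨d, -, rfl⟩ := Finset.mem_image.1 hP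
    set l : List (MGP.D j) := List.ofFn d with hl
    have hlen : l.length = k - 1 := by simp [hl]
    have hbi : Function.Injective (MGP.build j l) := MGP.build_injective j hj l
    refine ⟨?_, ?_, ?_, ?_, ?_⟩
    · rw [Finset.card_image_of_injective _ hbi, Finset.card_univ, ZMod.card]
    · intro S hS T hT hST
      obtain ⟨i, -, rfl⟩ := Finset.mem_image.1 hS
      obtain ⟨i', -, rfl⟩ := Finset.mem_image.1 hT
      exact MGP.build_disjoint j hj l (fun h => hST (by rw [h]))
    · intro S hS
      obtain ⟨i, -, rfl⟩ := Finset.mem_image.1 hS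
      rw [MGP.build_card j hj l i, hlen]
    · rw [Finset.image_biUnion]
      simp only [id_eq]
      rw [MGP.build_union j hj l, hlen]
      rw [show k - 1 + 1 = k from by omega]
    · intro r hr1 hrk S hS T hT
      obtain ⟨i, -, rfl⟩ := Finset.mem_image.1 hS
      obtain ⟨i', -, rfl⟩ := Finset.mem_image.1 hT
      exact MGP.build_powersum j hj l r (by rw [hlen]; omega) i i'
end

section
/- Let j ≥ 2, m ≥ 1 and k ≥ 1 be integers and set N = 2mj^k. Then the first N consecutive positive integers 1, 2, …, N can be partitioned into j pairwise disjoint sets, each containing exactly 2mj^{k−1} integers, such that for every exponent r = 1, 2, …, k the sum of the r-th powers of the members of each set is the same for all j sets. -/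
/-!
Prouhet's construction. Suppose the classes of a colouring `c` of `{0, …, n - 1}` by `Fin j`
have equal power sums in every degree `r < k`. Cut `{0, …, jn - 1}` into `j` blocks of length `n`
and colour block `t` by `c - t`; new class `v` is then the union over `t` of the old classes
`v + t` translated by `tn`. By the binomial theorem, translating by `b` changes the degree-`k`
power sum of an old class by an amount determined by its lower power sums, hence the same for
all classes, so the new classes also agree in degree `k`. The induction starts at degree `1` on
`{0, …, 2mj - 1}`: take the `j` blocks of `m` consecutive integers below `mj` and add to each
`x` its mirror image `2mj - 1 - x`. The final shift by `1` preserves equal power sums for the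
same binomial reason.
-/

open Finset

theorem sum_add_pow_sub_sum_pow {α R : Type*} [CommRing R] (s : Finset α) (f : α → R) (c : R)
    (r : ℕ) :
    ∑ x ∈ s, (f x + c) ^ r - ∑ x ∈ s, f x ^ r =
      ∑ i ∈ range r, (∑ x ∈ s, f x ^ i) * c ^ (r - i) * r.choose i := by
  simp_rw [add_pow, sum_comm (s := s), ← sum_mul, sum_range_succ, Nat.sub_self, pow_zero,
    Nat.choose_self, Nat.cast_one, mul_one, add_sub_cancel_right]

theorem sum_add_pow_sub_sum_pow_eq_of_forall_lt {α R : Type*} [CommRing R] {s t : Finset α}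
    (f : α → R) {r : ℕ} (h : ∀ i < r, ∑ x ∈ s, f x ^ i = ∑ x ∈ t, f x ^ i) (c : R) :
    ∑ x ∈ s, (f x + c) ^ r - ∑ x ∈ s, f x ^ r = ∑ x ∈ t, (f x + c) ^ r - ∑ x ∈ t, f x ^ r := by
  rw [sum_add_pow_sub_sum_pow, sum_add_pow_sub_sum_pow]
  exact sum_congr rfl fun i hi => by rw [h i (mem_range.1 hi)]

theorem sum_range_mul {M : Type*} [AddCommMonoid M] (f : ℕ → M) (j n : ℕ) :
    ∑ x ∈ range (j * n), f x = ∑ t ∈ range j, ∑ a ∈ range n, f (t * n + a) := by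
  induction j with
  | zero => simp
  | succ j ih => rw [Nat.succ_mul, sum_range_add, ih, sum_range_succ]

variable {ι : Type*} [DecidableEq ι]

def colorClass (c : ℕ → ι) (N : ℕ) (v : ι) : Finset ℕ := {x ∈ range N | c x = v}

theorem disjoint_colorClass {c : ℕ → ι} {N : ℕ} {v w : ι} (h : v ≠ w) :
    Disjoint (colorClass c N v) (colorClass c N w) :=
  disjoint_filter.2 fun _ _ hv hw => h (hv.symm.trans hw)

theorem lt_of_mem_colorClass {c : ℕ → ι} {N x : ℕ} {v : ι} (hx : x ∈ colorClass c N v) :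
    x < N :=
  mem_range.1 (mem_filter.1 hx).1

theorem biUnion_colorClass [Fintype ι] (c : ℕ → ι) (N : ℕ) :
    univ.biUnion (colorClass c N) = range N :=
  biUnion_filter_eq_of_maps_to fun _ _ => mem_univ _

/-- The degree bound is strict: a multigrade chain of degree `k` is the case `k + 1`. -/
def IsMultigradeColoring (c : ℕ → ι) (N k : ℕ) : Prop :=
  ∀ r < k, ∀ v w, ∑ x ∈ colorClass c N v, (x : ℤ) ^ r = ∑ x ∈ colorClass c N w, (x : ℤ) ^ r

namespace IsMultigradeColoring

variable {c : ℕ → ι} {N k : ℕ}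

theorem of_zero (c : ℕ → ι) (N : ℕ) : IsMultigradeColoring c N 0 :=
  fun _ hr => absurd hr (Nat.not_lt_zero _)

theorem mono (h : IsMultigradeColoring c N k) {l : ℕ} (hlk : l ≤ k) :
    IsMultigradeColoring c N l :=
  fun r hr => h r (hr.trans_le hlk)

theorem card_eq (h : IsMultigradeColoring c N 1) (v w : ι) :
    #(colorClass c N v) = #(colorClass c N w) := by
  simpa using h 0 one_pos v w

theorem card_mul_card_colorClass [Fintype ι] (h : IsMultigradeColoring c N 1) (v : ι) :
    Fintype.card ι * #(colorClass c N v) = N := by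
  calc Fintype.card ι * #(colorClass c N v) = ∑ w, #(colorClass c N w) := by
        simp [h.card_eq _ v]
    _ = N := by
        have := card_eq_sum_card_fiberwise (f := c) (s := range N) (t := univ)
          fun _ _ => mem_coe.2 (mem_univ _)
        rw [card_range] at this
        exact this.symm

theorem sum_add_pow_eq (h : IsMultigradeColoring c N k) {r : ℕ} (hr : r < k) (a : ℤ)
    (v w : ι) :
    ∑ x ∈ colorClass c N v, ((x : ℤ) + a) ^ r = ∑ x ∈ colorClass c N w, ((x : ℤ) + a) ^ r := by
  have := sum_add_pow_sub_sum_pow_eq_of_forall_lt ((↑) : ℕ → ℤ)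
    (fun i hi => h i (hi.trans hr) v w) a
  rwa [h r hr v w, sub_left_inj] at this

end IsMultigradeColoring

section Extend

open Fin.NatCast

variable {j : ℕ} [NeZero j]

def prouhetExtend (c : ℕ → Fin j) (n : ℕ) : ℕ → Fin j :=
  fun x => c (x % n) - ((x / n : ℕ) : Fin j)

theorem sum_colorClass_prouhetExtend {M : Type*} [AddCommMonoid M] (c : ℕ → Fin j) (n : ℕ)
    (g : ℕ → M) (v : Fin j) :
    ∑ x ∈ colorClass (prouhetExtend c n) (j * n) v, g x =
      ∑ t ∈ range j, ∑ a ∈ colorClass c n (v + (t : Fin j)), g (t * n + a) := by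
  simp only [colorClass, sum_filter]
  rw [sum_range_mul]
  refine sum_congr rfl fun t _ => sum_congr rfl fun a ha => ?_
  have ha : a < n := mem_range.1 ha
  have hdiv : (t * n + a) / n = t := by
    rw [Nat.add_comm, Nat.add_mul_div_right _ _ (by omega), Nat.div_eq_of_lt ha, zero_add]
  simp only [prouhetExtend, Nat.mul_add_mod_self_right, Nat.mod_eq_of_lt ha, hdiv,
    sub_eq_iff_eq_add]

theorem IsMultigradeColoring.prouhetExtend {c : ℕ → Fin j} {n k : ℕ}
    (h : IsMultigradeColoring c n k) :
    IsMultigradeColoring (prouhetExtend c n) (j * n) (k + 1) := by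
  intro r hr v w
  set P : Fin j → ℤ := fun u => ∑ a ∈ colorClass c n u, (a : ℤ) ^ r
  set D : ℤ → ℤ := fun b => ∑ a ∈ colorClass c n 0, ((a : ℤ) + b) ^ r - P 0
  have translate (u : Fin j) (b : ℤ) :
      ∑ a ∈ colorClass c n u, ((a : ℤ) + b) ^ r = P u + D b := by
    have := sum_add_pow_sub_sum_pow_eq_of_forall_lt ((↑) : ℕ → ℤ) (r := r)
      (fun i hi => h i (by omega) u 0) b
    simp only [P, D]
    linarith
  rw [sum_colorClass_prouhetExtend, sum_colorClass_prouhetExtend]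
  suffices ∀ v : Fin j, ∑ t ∈ range j, ∑ a ∈ colorClass c n (v + (t : Fin j)),
      ((t * n + a : ℕ) : ℤ) ^ r = ∑ u, P u + ∑ t ∈ range j, D (t * n) by rw [this, this]
  intro v
  calc ∑ t ∈ range j, ∑ a ∈ colorClass c n (v + (t : Fin j)), ((t * n + a : ℕ) : ℤ) ^ r
      = ∑ t ∈ range j, (P (v + t) + D (t * n)) := by
        refine sum_congr rfl fun t _ => ?_
        rw [← translate]
        refine sum_congr rfl fun a _ => ?_
        push_cast
        ring
    _ = ∑ u, P u + ∑ t ∈ range j, D (t * n) := by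
        rw [sum_add_distrib, ← Fin.sum_univ_eq_sum_range (fun t => P (v + t))]
        simp only [Fin.cast_val_eq_self]
        congr 1
        exact Fintype.sum_equiv (Equiv.addLeft v) _ _ fun _ => rfl

end Extend

def mirror (c : ℕ → ι) (M : ℕ) : ℕ → ι := fun x => if x < M then c x else c (2 * M - 1 - x)

theorem sum_colorClass_mirror {R : Type*} [AddCommMonoid R] (c : ℕ → ι) (M : ℕ) (g : ℕ → R)
    (v : ι) :
    ∑ x ∈ colorClass (mirror c M) (2 * M) v, g x =
      ∑ x ∈ colorClass c M v, (g x + g (2 * M - 1 - x)) := by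
  simp only [colorClass, sum_filter]
  rw [two_mul, sum_range_add,
    ← sum_range_reflect (fun x => if mirror c M (M + x) = v then g (M + x) else 0) M,
    ← sum_add_distrib]
  refine sum_congr rfl fun x hx => ?_
  have hx : x < M := mem_range.1 hx
  have hreflect : M + (M - 1 - x) = M + M - 1 - x := by omega
  simp only [mirror, two_mul, if_pos hx, hreflect, if_neg (by omega : ¬M + M - 1 - x < M),
    show M + M - 1 - (M + M - 1 - x) = x by omega]
  split_ifs <;> simp

theorem IsMultigradeColoring.mirror {c : ℕ → ι} {M : ℕ} (h : IsMultigradeColoring c M 1) :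
    IsMultigradeColoring (mirror c M) (2 * M) 2 := by
  intro r hr v w
  obtain ⟨C, hC⟩ : ∃ C : ℤ, ∀ x < M, (x : ℤ) ^ r + ((2 * M - 1 - x : ℕ) : ℤ) ^ r = C := by
    interval_cases r
    · exact ⟨2, fun x _ => by norm_num⟩
    · exact ⟨2 * M - 1, fun x hx => by simp only [pow_one]; omega⟩
  have hsum (u : ι) : ∑ x ∈ colorClass (_root_.mirror c M) (2 * M) u, (x : ℤ) ^ r =
      #(colorClass c M u) * C := by
    rw [sum_colorClass_mirror, sum_congr rfl fun x hx => hC x (lt_of_mem_colorClass hx),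
      sum_const, nsmul_eq_mul]
  rw [hsum, hsum, h.card_eq v w]

theorem exists_isMultigradeColoring (j m k : ℕ) [NeZero j] :
    ∃ c : ℕ → Fin j, IsMultigradeColoring c (2 * m * j ^ (k + 1)) (k + 2) := by
  induction k with
  | zero =>
    refine ⟨mirror (prouhetExtend (fun _ => 0) m) (j * m), ?_⟩
    rw [show 2 * m * j ^ (0 + 1) = 2 * (j * m) by ring]
    exact ((IsMultigradeColoring.of_zero (fun _ => 0) m).prouhetExtend).mirror
  | succ k ih =>
    obtain ⟨c, hc⟩ := ih
    refine ⟨prouhetExtend c (2 * m * j ^ (k + 1)), ?_⟩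
    rw [show 2 * m * j ^ (k + 1 + 1) = j * (2 * m * j ^ (k + 1)) by ring]
    exact hc.prouhetExtend

theorem image_range_natCast_add_one (N : ℕ) :
    (range N).image (fun x : ℕ => (x : ℤ) + 1) = Icc 1 (N : ℤ) := by
  ext y
  simp only [mem_image, mem_range, mem_Icc]
  constructor
  · rintro ⟨x, hx, rfl⟩
    omega
  · rintro ⟨h1, h2⟩
    exact ⟨(y - 1).toNat, by omega, by omega⟩

theorem first_two_m_j_pow_k_integers_multigrade_partition_general
    (j m k : ℕ) (hj : 2 ≤ j) (hk : 1 ≤ k) :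
    ∃ A : Fin j → Finset ℤ,
      (∀ v w : Fin j, v ≠ w → Disjoint (A v) (A w)) ∧
      (∀ v : Fin j, (A v).card = 2 * m * j ^ (k - 1)) ∧
      (Finset.univ.biUnion A = Finset.Icc (1 : ℤ) (2 * (m : ℤ) * (j : ℤ) ^ k)) ∧
      (∀ r : ℕ, 1 ≤ r → r ≤ k → ∀ v w : Fin j,
        ∑ x ∈ A v, x ^ r = ∑ x ∈ A w, x ^ r) := by
  have : NeZero j := ⟨by omega⟩
  obtain ⟨k, rfl⟩ : ∃ k', k = k' + 1 := ⟨k - 1, by omega⟩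
  obtain ⟨c, hc⟩ := exists_isMultigradeColoring j m k
  have hinj : Function.Injective fun x : ℕ => (x : ℤ) + 1 := fun x y hxy => by simpa using hxy
  refine ⟨fun v => (colorClass c (2 * m * j ^ (k + 1)) v).image fun x : ℕ => (x : ℤ) + 1,
    fun v w hvw => (disjoint_image hinj).2 (disjoint_colorClass hvw), fun v => ?_, ?_,
    fun r _ hr v w => ?_⟩
  · rw [card_image_of_injective _ hinj]
    have hcard := (hc.mono (by omega : 1 ≤ k + 2)).card_mul_card_colorClass v
    rw [Fintype.card_fin] at hcard
    exact Nat.eq_of_mul_eq_mul_left (by omega) (hcard.trans (by rw [Nat.add_sub_cancel]; ring))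
  · rw [← biUnion_image, biUnion_colorClass, image_range_natCast_add_one]
    push_cast
    rfl
  · rw [sum_image hinj.injOn, sum_image hinj.injOn]
    exact hc.sum_add_pow_eq (by omega) 1 v w

/-- **Theorem 7 (existence part).** For integers `j ≥ 2`, `m ≥ 1` and `k ≥ 1`, with
`N = 2 * m * j ^ k`, the integers `1, 2, …, N` can be partitioned into `j` pairwise
disjoint sets of `2 * m * j ^ (k - 1)` integers each, such that for every exponent
`r = 1, …, k` the sums of the `r`-th powers of the members of the `j` sets all agree. -/
theorem first_two_m_j_pow_k_integers_multigrade_partition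
    (j m k : ℕ) (hj : 2 ≤ j) (hm : 1 ≤ m) (hk : 1 ≤ k) :
    ∃ A : Fin j → Finset ℤ,
      (∀ v w : Fin j, v ≠ w → Disjoint (A v) (A w)) ∧
      (∀ v : Fin j, (A v).card = 2 * m * j ^ (k - 1)) ∧
      (Finset.univ.biUnion A = Finset.Icc (1 : ℤ) (2 * (m : ℤ) * (j : ℤ) ^ k)) ∧
      (∀ r : ℕ, 1 ≤ r → r ≤ k → ∀ v w : Fin j,
        ∑ x ∈ A v, x ^ r = ∑ x ∈ A w, x ^ r) :=
  first_two_m_j_pow_k_integers_multigrade_partition_general j m k hj hk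
end

section
/- Let j ≥ 2, m ≥ 1 and k ≥ 1 be integers and set N = 2mj^k. Then there exist at least ((j−1)!)^{k−1} distinct partitions of {1, 2, …, N} into j pairwise disjoint sets of 2mj^{k−1} integers each, such that in each partition, for every exponent r = 1, 2, …, k, the sum of the r-th powers of the members of each set is the same for all j sets. (Two partitions are distinct if they differ as unordered families of sets.) -/
open Finset

namespace Multigrade

def baseFn (j m u : ℕ) : ZMod j :=
  if u < m * j then (u : ZMod j) else ((2 * m * j - 1 - u : ℕ) : ZMod j)

def g (j m k : ℕ) (σ : ℕ → Equiv.Perm (ZMod j)) (x : ℕ) : ZMod j :=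
  baseFn j m (x % (2 * m * j)) +
    ∑ t ∈ Finset.Icc 1 (k - 1), σ t (((x / (2 * m * j ^ t)) % j : ℕ) : ZMod j)

lemma sum_blocks {M : Type*} [AddCommMonoid M] (F : ℕ → M) (n : ℕ) (a : ℕ) :
    ∑ x ∈ range (a * n), F x = ∑ d ∈ range a, ∑ y ∈ range n, F (d * n + y) := by
  induction a with
  | zero => simp
  | succ a ih =>
    rw [Nat.succ_mul, Finset.sum_range_add, ih, Finset.sum_range_succ]

section Main

variable {j m k : ℕ} (σ : ℕ → Equiv.Perm (ZMod j))

lemma pow_block_le (hj : 2 ≤ j) {s t : ℕ} (hst : s ≤ t) :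
    2 * m * j ^ s ≤ 2 * m * j ^ t :=
  Nat.mul_le_mul_left _ (Nat.pow_le_pow_right (by omega) hst)

lemma g_small (hσ0 : ∀ t, σ t 0 = 0) (hj : 2 ≤ j)
    (x : ℕ) (hx : x < 2 * m * j) : g j m k σ x = baseFn j m x := by
  unfold g
  rw [Nat.mod_eq_of_lt hx]
  have h : ∀ t ∈ Finset.Icc 1 (k - 1),
      σ t (((x / (2 * m * j ^ t)) % j : ℕ) : ZMod j) = 0 := by
    intro t ht
    simp only [Finset.mem_Icc] at ht
    have h1 : 2 * m * j ≤ 2 * m * j ^ t := by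
      simpa using pow_block_le hj (s := 1) ht.1
    rw [Nat.div_eq_of_lt (lt_of_lt_of_le hx h1)]
    simpa using hσ0 t
  rw [Finset.sum_congr rfl h]
  simp

lemma g_block (hσ0 : ∀ t, σ t 0 = 0) (hj : 2 ≤ j)
    {t : ℕ} (ht1 : 1 ≤ t) (htk : t ≤ k - 1) {d y : ℕ} (hd : d < j)
    (hy : y < 2 * m * j ^ t) :
    g j m k σ (d * (2 * m * j ^ t) + y) = g j m k σ y + σ t ((d : ℕ) : ZMod j) := by
  have hj1 : 1 ≤ j := by omega
  set x := d * (2 * m * j ^ t) + y with hxdef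
  obtain ⟨t', rfl⟩ : ∃ t', t = t' + 1 := ⟨t - 1, by omega⟩
  have hmod : x % (2 * m * j) = y % (2 * m * j) := by
    have hx2 : x = y + (2 * m * j) * (d * j ^ t') := by
      rw [hxdef, pow_succ]; ring
    rw [hx2, Nat.add_mul_mod_self_left]
  have hdigit : ∀ s, 1 ≤ s →
      (x / (2 * m * j ^ s)) % j =
        (if s = t' + 1 then d else (y / (2 * m * j ^ s)) % j) := by
    intro s hs1
    rcases lt_trichotomy s (t' + 1) with hst | hst | hst
    · rw [if_neg (by omega)]
      have hpos : 0 < 2 * m * j ^ s := by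
        have h0 : 0 < 2 * m * j ^ (t' + 1) := lt_of_le_of_lt (Nat.zero_le _) hy
        have hm0 : 0 < 2 * m := by
          rcases Nat.eq_zero_or_pos (2 * m) with h | h
          · rw [h] at h0; simp at h0
          · exact h
        exact Nat.mul_pos hm0 (Nat.pow_pos (by omega))
      have hx2 : x = y + (d * j ^ (t' + 1 - s)) * (2 * m * j ^ s) := by
        rw [hxdef]
        have : j ^ (t' + 1) = j ^ (t' + 1 - s) * j ^ s := by
          rw [← pow_add]; congr 1; omega
        rw [this]; ring
      rw [hx2, Nat.add_mul_div_right _ _ hpos]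
      have hts : t' + 1 - s = (t' + 1 - s - 1) + 1 := by omega
      rw [hts, pow_succ, ← mul_assoc, Nat.add_mul_mod_self_right]
    · subst hst
      rw [if_pos rfl]
      have hpos : 0 < 2 * m * j ^ (t' + 1) := lt_of_le_of_lt (Nat.zero_le _) hy
      have hx2 : x = y + d * (2 * m * j ^ (t' + 1)) := by rw [hxdef]; ring
      rw [hx2, Nat.add_mul_div_right _ _ hpos, Nat.div_eq_of_lt hy]
      simpa using Nat.mod_eq_of_lt hd
    · rw [if_neg (by omega)]
      have hxlt : x < 2 * m * j ^ s := by
        have h1 : x < (d + 1) * (2 * m * j ^ (t' + 1)) := by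
          rw [hxdef]; nlinarith [hy]
        have h2 : (d + 1) * (2 * m * j ^ (t' + 1)) ≤ j * (2 * m * j ^ (t' + 1)) :=
          Nat.mul_le_mul_right _ (by omega)
        have h3 : j * (2 * m * j ^ (t' + 1)) = 2 * m * j ^ (t' + 2) := by
          rw [pow_succ]; ring
        have h4 : 2 * m * j ^ (t' + 2) ≤ 2 * m * j ^ s := pow_block_le hj (by omega)
        omega
      have hylt : y < 2 * m * j ^ s := lt_of_lt_of_le hy (pow_block_le hj (by omega))
      rw [Nat.div_eq_of_lt hxlt, Nat.div_eq_of_lt hylt]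
  unfold g
  rw [hmod]
  have htmem : t' + 1 ∈ Finset.Icc 1 (k - 1) := Finset.mem_Icc.mpr ⟨by omega, htk⟩
  rw [← Finset.sum_erase_add _ _ htmem, ← Finset.sum_erase_add _ _ htmem]
  have h1 : ∀ s ∈ (Finset.Icc 1 (k - 1)).erase (t' + 1),
      σ s (((x / (2 * m * j ^ s)) % j : ℕ) : ZMod j) =
      σ s (((y / (2 * m * j ^ s)) % j : ℕ) : ZMod j) := by
    intro s hs
    simp only [Finset.mem_erase, Finset.mem_Icc] at hs
    rw [hdigit s hs.2.1, if_neg hs.1]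
  rw [Finset.sum_congr rfl h1, hdigit _ (by omega), if_pos rfl]
  have hyt : (y / (2 * m * j ^ (t' + 1))) % j = 0 := by
    rw [Nat.div_eq_of_lt hy]; simp
  rw [hyt]
  push_cast
  rw [hσ0]
  ring

lemma cast_cond [NeZero j] (i : ZMod j) (x : ℕ) :
    (((x : ℕ) : ZMod j) = i) ↔ x % j = i.val := by
  constructor
  · intro h; rw [← h, ZMod.val_natCast]
  · intro h
    have h2 := ZMod.natCast_rightInverse (n := j) i
    rw [← h2, ← h, ZMod.natCast_mod]

lemma count_res [NeZero j] (i : ZMod j) :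
    ((range (m * j)).filter (fun x => ((x : ℕ) : ZMod j) = i)).card = m := by
  have hj0 : 0 < j := Nat.pos_of_ne_zero (NeZero.ne j)
  have hv : i.val < j := ZMod.val_lt i
  have key : ((range (m * j)).filter (fun x => ((x : ℕ) : ZMod j) = i)).card
      = (range m).card := by
    apply Finset.card_bij' (fun x _ => x / j) (fun q _ => q * j + i.val)
    · intro x hx
      simp only [mem_filter, mem_range] at hx
      simp only [mem_range]
      exact Nat.div_lt_of_lt_mul (by rw [mul_comm]; exact hx.1)
    · intro q hq
      simp only [mem_range] at hq
      simp only [mem_filter, mem_range, cast_cond]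
      refine ⟨?_, ?_⟩
      · calc q * j + i.val < q * j + j := by omega
          _ = (q + 1) * j := by ring
          _ ≤ m * j := Nat.mul_le_mul_right _ (by omega)
      · rw [add_comm, Nat.add_mul_mod_self_right, Nat.mod_eq_of_lt hv]
    · intro x hx
      simp only [mem_filter, mem_range, cast_cond] at hx
      obtain ⟨-, h2⟩ := hx
      conv_rhs => rw [← Nat.div_add_mod x j]
      rw [h2, mul_comm]
    · intro q hq
      rw [mul_comm, Nat.mul_add_div hj0, Nat.div_eq_of_lt hv, Nat.add_zero]
  simpa using key

lemma sum_range_cast [NeZero j] {M : Type*} [AddCommMonoid M] (h : ZMod j → M) :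
    ∑ d ∈ range j, h ((d : ℕ) : ZMod j) = ∑ c : ZMod j, h c := by
  apply Finset.sum_nbij' (fun d => ((d : ℕ) : ZMod j)) (fun c => c.val)
  · intro a _; exact Finset.mem_univ _
  · intro c _; exact Finset.mem_range.mpr (ZMod.val_lt c)
  · intro a ha; rw [ZMod.val_natCast, Nat.mod_eq_of_lt (Finset.mem_range.mp ha)]
  · intro c _; exact ZMod.natCast_rightInverse c
  · intro a _; rfl

lemma base_sum [NeZero j] (hj : 2 ≤ j) (hm : 1 ≤ m) (r : ℕ) (hr : r ≤ 1) (i : ZMod j) :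
    ∑ x ∈ (range (2 * m * j)).filter (fun x => baseFn j m x = i), (x : ℤ) ^ r
      = if r = 0 then (2 * m : ℤ) else (m : ℤ) * (2 * m * j - 1) := by
  have hA : j ≤ m * j := Nat.le_mul_of_pos_left j (by omega)
  have hA1 : 1 ≤ m * j := by omega
  have h2A : 2 * m * j = m * j + m * j := by ring
  rw [Finset.sum_filter]
  rw [show range (2 * m * j) = Finset.Ico 0 (m * j + m * j) by
    rw [← h2A, Finset.range_eq_Ico]]
  rw [← Finset.sum_Ico_consecutive _ (Nat.zero_le (m * j)) (by omega : m * j ≤ m * j + m * j)]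
  rw [← Finset.range_eq_Ico]
  have hrefl : ∑ x ∈ Finset.Ico (m * j) (m * j + m * j),
      (if baseFn j m x = i then (x : ℤ) ^ r else 0)
      = ∑ x ∈ range (m * j),
      (if baseFn j m (2 * m * j - 1 - x) = i then ((2 * m * j - 1 - x : ℕ) : ℤ) ^ r else 0) := by
    apply Finset.sum_nbij' (fun x => 2 * m * j - 1 - x) (fun x => 2 * m * j - 1 - x)
    · intro a ha
      simp only [Finset.mem_Ico] at ha
      simp only [mem_range]
      omega
    · intro a ha
      simp only [mem_range] at ha
      simp only [Finset.mem_Ico]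
      omega
    · intro a ha; simp only [Finset.mem_Ico] at ha; omega
    · intro a ha; simp only [mem_range] at ha; omega
    · intro a ha
      simp only [Finset.mem_Ico] at ha
      have h : 2 * m * j - 1 - (2 * m * j - 1 - a) = a := by omega
      rw [h]
  rw [hrefl, ← Finset.sum_add_distrib]
  have hterm : ∀ x ∈ range (m * j),
      ((if baseFn j m x = i then (x : ℤ) ^ r else 0) +
        (if baseFn j m (2 * m * j - 1 - x) = i then ((2 * m * j - 1 - x : ℕ) : ℤ) ^ r else 0))
      = (if ((x : ℕ) : ZMod j) = i then ((x : ℤ) ^ r + ((2 * m * j - 1 - x : ℕ) : ℤ) ^ r) else 0) := by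
    intro x hx
    simp only [mem_range] at hx
    have hb1 : baseFn j m x = ((x : ℕ) : ZMod j) := by
      unfold baseFn; rw [if_pos hx]
    have hb2 : baseFn j m (2 * m * j - 1 - x) = ((x : ℕ) : ZMod j) := by
      unfold baseFn
      rw [if_neg (by omega)]
      congr 1
      omega
    rw [hb1, hb2]
    split <;> simp
  rw [Finset.sum_congr rfl hterm, ← Finset.sum_filter]
  rcases Nat.le_one_iff_eq_zero_or_eq_one.mp hr with rfl | rfl
  · simp only [pow_zero, if_pos rfl]
    rw [Finset.sum_const, count_res i]
    push_cast; ring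
  · simp only [pow_one, if_neg one_ne_zero]
    have hcast : ∀ x ∈ (range (m * j)).filter (fun x => ((x : ℕ) : ZMod j) = i),
        ((x : ℤ) + ((2 * m * j - 1 - x : ℕ) : ℤ)) = ((2 * m * j : ℕ) : ℤ) - 1 := by
      intro x hx
      simp only [mem_filter, mem_range] at hx
      have h : (((2 * m * j - 1 - x : ℕ)) : ℤ) = ((2 * m * j : ℕ) : ℤ) - 1 - (x : ℤ) := by
        omega
      rw [h]; ring
    rw [Finset.sum_congr rfl hcast, Finset.sum_const, count_res i]
    push_cast; ring

def W (j m k : ℕ) (σ : ℕ → Equiv.Perm (ZMod j)) (n : ℕ) (c : ZMod j) (s : ℕ) : ℤ :=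
  ∑ y ∈ (range n).filter (fun y => g j m k σ y = c), (y : ℤ) ^ s

lemma balanced [NeZero j] (hσ0 : ∀ t, σ t 0 = 0) (hj : 2 ≤ j) (hm : 1 ≤ m) :
    ∀ t, 1 ≤ t → t ≤ k → ∀ r, r ≤ t → ∀ i i' : ZMod j,
      ∑ x ∈ (range (2 * m * j ^ t)).filter (fun x => g j m k σ x = i), (x : ℤ) ^ r =
      ∑ x ∈ (range (2 * m * j ^ t)).filter (fun x => g j m k σ x = i'), (x : ℤ) ^ r := by
  intro t ht1
  induction t, ht1 using Nat.le_induction with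
  | base =>
    intro _ r hr i i'
    have hfilt : ∀ c : ZMod j, (range (2 * m * j ^ 1)).filter (fun x => g j m k σ x = c)
        = (range (2 * m * j)).filter (fun x => baseFn j m x = c) := by
      intro c
      rw [pow_one]
      apply Finset.filter_congr
      intro x hx
      rw [g_small σ hσ0 hj x (Finset.mem_range.mp hx)]
    rw [pow_one] at *
    rw [hfilt i, hfilt i', base_sum hj hm r hr i, base_sum hj hm r hr i']
  | succ t ht1 ih =>
    intro htk r hr i i'
    have hk1 : t ≤ k := by omega
    have htk' : t ≤ k - 1 := by omega
    have hsplit : 2 * m * j ^ (t + 1) = j * (2 * m * j ^ t) := by rw [pow_succ]; ring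
    have key : ∀ i : ZMod j,
        ∑ x ∈ (range (2 * m * j ^ (t + 1))).filter (fun x => g j m k σ x = i), (x : ℤ) ^ r
        = (∑ d ∈ range j, ∑ s ∈ range r,
            W j m k σ (2 * m * j ^ t) 0 s *
              (((d * (2 * m * j ^ t) : ℕ) : ℤ) ^ (r - s) * (r.choose s)))
          + ∑ c : ZMod j, W j m k σ (2 * m * j ^ t) c r := by
      intro i
      rw [Finset.sum_filter, hsplit, sum_blocks]
      have hinner : ∀ d ∈ range j,
          ∑ y ∈ range (2 * m * j ^ t),
            (if g j m k σ (d * (2 * m * j ^ t) + y) = i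
              then ((d * (2 * m * j ^ t) + y : ℕ) : ℤ) ^ r else 0)
          = (∑ s ∈ range r,
              W j m k σ (2 * m * j ^ t) 0 s *
                (((d * (2 * m * j ^ t) : ℕ) : ℤ) ^ (r - s) * (r.choose s)))
            + W j m k σ (2 * m * j ^ t) (i - σ t ((d : ℕ) : ZMod j)) r := by
        intro d hd
        have hd' : d < j := Finset.mem_range.mp hd
        have h1 : ∀ y ∈ range (2 * m * j ^ t),
            (if g j m k σ (d * (2 * m * j ^ t) + y) = i
              then ((d * (2 * m * j ^ t) + y : ℕ) : ℤ) ^ r else 0)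
            = (if g j m k σ y = i - σ t ((d : ℕ) : ZMod j)
              then ((y : ℤ) + ((d * (2 * m * j ^ t) : ℕ) : ℤ)) ^ r else 0) := by
          intro y hy
          have hy' : y < 2 * m * j ^ t := Finset.mem_range.mp hy
          have hcond : g j m k σ (d * (2 * m * j ^ t) + y) = i ↔
              g j m k σ y = i - σ t ((d : ℕ) : ZMod j) := by
            rw [g_block σ hσ0 hj ht1 htk' hd' hy']
            constructor
            · intro h; rw [← h]; ring
            · intro h; rw [h]; ring
          have hval : ((d * (2 * m * j ^ t) + y : ℕ) : ℤ) ^ r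
              = ((y : ℤ) + ((d * (2 * m * j ^ t) : ℕ) : ℤ)) ^ r := by
            push_cast; ring
          rw [if_congr hcond hval rfl]
        rw [Finset.sum_congr rfl h1, ← Finset.sum_filter]
        have h2 : ∀ y ∈ (range (2 * m * j ^ t)).filter
              (fun y => g j m k σ y = i - σ t ((d : ℕ) : ZMod j)),
            ((y : ℤ) + ((d * (2 * m * j ^ t) : ℕ) : ℤ)) ^ r
            = ∑ s ∈ range (r + 1),
                (y : ℤ) ^ s * ((d * (2 * m * j ^ t) : ℕ) : ℤ) ^ (r - s) * (r.choose s) := by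
          intro y _
          exact add_pow _ _ r
        rw [Finset.sum_congr rfl h2, Finset.sum_comm]
        have h3 : ∀ s ∈ range (r + 1),
            ∑ y ∈ (range (2 * m * j ^ t)).filter
              (fun y => g j m k σ y = i - σ t ((d : ℕ) : ZMod j)),
              (y : ℤ) ^ s * ((d * (2 * m * j ^ t) : ℕ) : ℤ) ^ (r - s) * (r.choose s)
            = W j m k σ (2 * m * j ^ t) (i - σ t ((d : ℕ) : ZMod j)) s *
                (((d * (2 * m * j ^ t) : ℕ) : ℤ) ^ (r - s) * (r.choose s)) := by
          intro s _
          unfold W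
          rw [Finset.sum_mul]
          apply Finset.sum_congr rfl
          intro y _
          ring
        rw [Finset.sum_congr rfl h3, Finset.sum_range_succ]
        have h4 : W j m k σ (2 * m * j ^ t) (i - σ t ((d : ℕ) : ZMod j)) r *
            (((d * (2 * m * j ^ t) : ℕ) : ℤ) ^ (r - r) * (r.choose r)) =
            W j m k σ (2 * m * j ^ t) (i - σ t ((d : ℕ) : ZMod j)) r := by
          simp
        rw [h4]
        congr 1
        apply Finset.sum_congr rfl
        intro s hs
        have hst : s ≤ t := by
          have := Finset.mem_range.mp hs
          omega
        congr 1
        exact ih hk1 s hst (i - σ t ((d : ℕ) : ZMod j)) 0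
      rw [Finset.sum_congr rfl hinner, Finset.sum_add_distrib]
      congr 1
      rw [sum_range_cast (fun c => W j m k σ (2 * m * j ^ t) (i - σ t c) r)]
      exact Equiv.sum_comp ((σ t).trans (Equiv.subLeft i))
        (fun c => W j m k σ (2 * m * j ^ t) c r)
    rw [key i, key i']

end Main
end Multigrade

namespace Multigrade
section Assemble
open Finset

variable {j m k : ℕ}

def fibD (j m k : ℕ) (σ : ℕ → Equiv.Perm (ZMod j)) (i : ZMod j) : Finset ℕ :=
  (Finset.range (2 * m * j ^ k)).filter (fun x => g j m k σ x = i)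

def FnD (j m k : ℕ) (σ : ℕ → Equiv.Perm (ZMod j)) (i : ZMod j) : Finset ℤ :=
  (fibD j m k σ i).image (fun x : ℕ => (x : ℤ) + 1)

def PaD (j m k : ℕ) [NeZero j] (σ : ℕ → Equiv.Perm (ZMod j)) : Finset (Finset ℤ) :=
  Finset.image (FnD j m k σ) Finset.univ

lemma hinj1 : Function.Injective (fun x : ℕ => (x : ℤ) + 1) := by
  intro a b h
  simp only at h
  omega

lemma hmemF [NeZero j] (σ : ℕ → Equiv.Perm (ZMod j)) (i : ZMod j) (z : ℤ) :
    z ∈ FnD j m k σ i ↔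
      ∃ x : ℕ, x < 2 * m * j ^ k ∧ g j m k σ x = i ∧ z = (x : ℤ) + 1 := by
  unfold FnD fibD
  simp only [Finset.mem_image, Finset.mem_filter, Finset.mem_range]
  constructor
  · rintro ⟨x, ⟨h1, h2⟩, h3⟩; exact ⟨x, h1, h2, h3.symm⟩
  · rintro ⟨x, h1, h2, h3⟩; exact ⟨x, ⟨h1, h2⟩, h3.symm⟩

end Assemble
end Multigrade

open Finset Multigrade in
/-- **Theorem 7.** For integers `j ≥ 2`, `m ≥ 1` and `k ≥ 1`, with `N = 2 * m * j ^ k`,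
there are at least `((j-1)!)^(k-1)` distinct partitions (as unordered families of sets,
encoded as a `Finset` of partitions, each partition itself a `Finset` of `j` sets) of
`{1, …, N}` into `j` pairwise disjoint sets of `2 * m * j ^ (k-1)` integers each, such
that in each partition the sums of the `r`-th powers of the members of the `j` sets
agree for `r = 1, …, k`. -/
theorem first_two_m_j_pow_k_integers_multigrade_partition_count
    (j m k : ℕ) (hj : 2 ≤ j) (hm : 1 ≤ m) (hk : 1 ≤ k) :
    ∃ Ps : Finset (Finset (Finset ℤ)),
      (Nat.factorial (j - 1)) ^ (k - 1) ≤ Ps.card ∧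
      ∀ P ∈ Ps,
        P.card = j ∧
        (∀ S ∈ P, ∀ T ∈ P, S ≠ T → Disjoint S T) ∧
        (∀ S ∈ P, S.card = 2 * m * j ^ (k - 1)) ∧
        (P.biUnion id = Finset.Icc (1 : ℤ) (2 * (m : ℤ) * (j : ℤ) ^ k)) ∧
        (∀ r : ℕ, 1 ≤ r → r ≤ k → ∀ S ∈ P, ∀ T ∈ P,
          ∑ x ∈ S, x ^ r = ∑ x ∈ T, x ^ r) := by
  haveI : NeZero j := ⟨by omega⟩
  classical
  have hj0 : 0 < j := by omega
  have hjN : j ≤ 2 * m * j ^ k := by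
    have h1 : j ^ 1 ≤ j ^ k := Nat.pow_le_pow_right (by omega) hk
    have h2 : j ^ k ≤ 2 * m * j ^ k := Nat.le_mul_of_pos_left _ (by omega)
    simp only [pow_one] at h1
    omega
  have hj2mj : j ≤ 2 * m * j := by
    calc j = 1 * j := (one_mul j).symm
    _ ≤ 2 * m * j := Nat.mul_le_mul_right _ (by omega)
  have hjmj : j ≤ m * j := Nat.le_mul_of_pos_left j (by omega)
  have hNsplit : j * (2 * m * j ^ (k - 1)) = 2 * m * j ^ k := by
    conv_rhs => rw [show k = (k - 1) + 1 from by omega]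
    rw [pow_succ]; ring
  set σf : (Fin (k - 1) → Equiv.Perm {x : ZMod j // x ≠ 0}) → ℕ → Equiv.Perm (ZMod j) :=
    fun σ t =>
      if h : 1 ≤ t ∧ t ≤ k - 1 then Equiv.Perm.ofSubtype (σ ⟨t - 1, by omega⟩) else 1
    with hσf
  have hσ0 : ∀ σ, ∀ t, σf σ t 0 = 0 := by
    intro σ t
    by_cases h : 1 ≤ t ∧ t ≤ k - 1
    · simp only [hσf, dif_pos h]
      exact Equiv.Perm.ofSubtype_apply_of_not_mem _ (by simp)
    · simp [hσf, dif_neg h]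
  -- class of small representatives
  have hgsmall : ∀ σ (c : ZMod j), g j m k (σf σ) c.val = c := by
    intro σ c
    have hv : c.val < j := ZMod.val_lt c
    rw [g_small _ (hσ0 σ) hj _ (lt_of_lt_of_le hv hj2mj)]
    unfold baseFn
    rw [if_pos (lt_of_lt_of_le hv hjmj)]
    exact ZMod.natCast_rightInverse c
  have hrep : ∀ σ (c : ZMod j), ((c.val : ℕ) : ℤ) + 1 ∈ FnD j m k (σf σ) c := by
    intro σ c
    exact (hmemF _ c _).mpr ⟨c.val, lt_of_lt_of_le (ZMod.val_lt c) hjN, hgsmall σ c, rfl⟩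
  -- injectivity of the sets in a fixed partition
  have hFinj : ∀ σ, Function.Injective (FnD j m k (σf σ)) := by
    intro σ i i' h
    have h1 := hrep σ i
    rw [h] at h1
    obtain ⟨x, -, hx2, hx3⟩ := (hmemF _ i' _).mp h1
    have hxi : x = i.val := by omega
    rw [hxi, hgsmall σ i] at hx2
    exact hx2
  -- cardinality of fibers
  have hcard : ∀ σ (i : ZMod j), (fibD j m k (σf σ) i).card = 2 * m * j ^ (k - 1) := by
    intro σ i
    have hall : ∀ i' : ZMod j,
        (fibD j m k (σf σ) i').card = (fibD j m k (σf σ) i).card := by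
      intro i'
      have hb := balanced (σf σ) (hσ0 σ) hj hm k hk le_rfl 0 (by omega) i' i
      simp only [pow_zero, Finset.sum_const, nsmul_eq_mul, mul_one] at hb
      unfold fibD
      exact_mod_cast hb
    have hsum : (Finset.range (2 * m * j ^ k)).card
        = ∑ i' : ZMod j, (fibD j m k (σf σ) i').card :=
      Finset.card_eq_sum_card_fiberwise (fun x _ => Finset.mem_univ _)
    rw [Finset.card_range] at hsum
    rw [Finset.sum_congr rfl (fun i' _ => hall i'), Finset.sum_const, Finset.card_univ,
      ZMod.card, smul_eq_mul] at hsum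
    have h2 : j * (fibD j m k (σf σ) i).card = j * (2 * m * j ^ (k - 1)) := by
      rw [hNsplit]; omega
    exact Nat.eq_of_mul_eq_mul_left hj0 h2
  -- injectivity of the partition map
  have hPinj : Function.Injective (fun σ => PaD j m k (σf σ)) := by
    intro σ τ hP
    simp only at hP
    by_contra hne
    have hex : ∃ (t : Fin (k - 1)) (a : {x : ZMod j // x ≠ 0}), σ t a ≠ τ t a := by
      by_contra hc
      push_neg at hc
      exact hne (funext fun t => Equiv.ext (hc t))
    obtain ⟨t, a, hta⟩ := hex
    have htlt : (t : ℕ) < k - 1 := t.isLt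
    have ht'1 : 1 ≤ (t : ℕ) + 1 := by omega
    have ht'2 : (t : ℕ) + 1 ≤ k - 1 := by omega
    have hσft : ∀ ρ : Fin (k - 1) → Equiv.Perm {x : ZMod j // x ≠ 0}, σf ρ ((t : ℕ) + 1) = Equiv.Perm.ofSubtype (ρ t) := by
      intro ρ
      simp only [hσf,
        dif_pos (⟨ht'1, ht'2⟩ : 1 ≤ (t : ℕ) + 1 ∧ (t : ℕ) + 1 ≤ k - 1)]
      have he : (⟨(t : ℕ) + 1 - 1, by omega⟩ : Fin (k - 1)) = t := Fin.ext (by simp)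
      rw [he]
    have hofs : ∀ ρ : Fin (k - 1) → Equiv.Perm {x : ZMod j // x ≠ 0}, Equiv.Perm.ofSubtype (ρ t) (a : ZMod j)
        = ((ρ t a : {x : ZMod j // x ≠ 0}) : ZMod j) := by
      intro ρ
      rw [Equiv.Perm.ofSubtype_apply_of_mem (ρ t) a.2]
    have hd : (a : ZMod j).val < j := ZMod.val_lt _
    have hcastd : (((a : ZMod j).val : ℕ) : ZMod j) = (a : ZMod j) :=
      ZMod.natCast_rightInverse _
    have hblockpos : 0 < 2 * m * j ^ ((t : ℕ) + 1) :=
      Nat.mul_pos (by omega) (Nat.pow_pos hj0)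
    set x : ℕ := (a : ZMod j).val * (2 * m * j ^ ((t : ℕ) + 1)) with hx
    have hxN : x < 2 * m * j ^ k := by
      have h1 : x ≤ (j - 1) * (2 * m * j ^ (k - 1)) := by
        rw [hx]
        exact Nat.mul_le_mul (by omega) (pow_block_le hj (by omega))
      have h2 : (j - 1) * (2 * m * j ^ (k - 1)) < j * (2 * m * j ^ (k - 1)) :=
        (Nat.mul_lt_mul_right (Nat.mul_pos (by omega) (Nat.pow_pos hj0))).mpr (by omega)
      omega
    have hg0 : ∀ ρ : Fin (k - 1) → Equiv.Perm {x : ZMod j // x ≠ 0}, g j m k (σf ρ) 0 = 0 := by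
      intro ρ
      have := hgsmall ρ 0
      simpa [ZMod.val_zero] using this
    have hgx : ∀ ρ : Fin (k - 1) → Equiv.Perm {x : ZMod j // x ≠ 0}, g j m k (σf ρ) x = Equiv.Perm.ofSubtype (ρ t) (a : ZMod j) := by
      intro ρ
      rw [show x = (a : ZMod j).val * (2 * m * j ^ ((t : ℕ) + 1)) + 0 from
        by rw [Nat.add_zero]]
      rw [g_block (σf ρ) (hσ0 ρ) hj ht'1 ht'2 hd hblockpos]
      rw [hg0 ρ, hσft ρ, hcastd, zero_add]
    have hcc : Equiv.Perm.ofSubtype (σ t) (a : ZMod j)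
        ≠ Equiv.Perm.ofSubtype (τ t) (a : ZMod j) := by
      rw [hofs σ, hofs τ]
      intro h
      exact hta (Subtype.ext h)
    have hm1 : ((x : ℕ) : ℤ) + 1 ∈ FnD j m k (σf τ) (Equiv.Perm.ofSubtype (τ t) (a : ZMod j)) :=
      (hmemF _ _ _).mpr ⟨x, hxN, hgx τ, rfl⟩
    have hm2 : (((Equiv.Perm.ofSubtype (τ t) (a : ZMod j)).val : ℕ) : ℤ) + 1
        ∈ FnD j m k (σf τ) (Equiv.Perm.ofSubtype (τ t) (a : ZMod j)) := hrep τ _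
    have hFτ : FnD j m k (σf τ) (Equiv.Perm.ofSubtype (τ t) (a : ZMod j)) ∈ PaD j m k (σf σ) := by
      rw [hP]
      unfold PaD
      exact Finset.mem_image_of_mem _ (Finset.mem_univ _)
    unfold PaD at hFτ
    obtain ⟨i0, -, hFeq⟩ := Finset.mem_image.mp hFτ
    rw [← hFeq] at hm1 hm2
    obtain ⟨x1, -, hx1b, hx1c⟩ := (hmemF _ i0 _).mp hm1
    obtain ⟨x2, -, hx2b, hx2c⟩ := (hmemF _ i0 _).mp hm2
    have hx1x : x1 = x := by omega
    have hx2y : x2 = (Equiv.Perm.ofSubtype (τ t) (a : ZMod j)).val := by omega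
    rw [hx1x, hgx σ] at hx1b
    rw [hx2y, hgsmall σ _] at hx2b
    exact hcc (by rw [hx1b, hx2b])
  refine ⟨Finset.image (fun σ => PaD j m k (σf σ)) Finset.univ, ?_, ?_⟩
  · rw [Finset.card_image_of_injective _ hPinj, Finset.card_univ]
    have hsub : Fintype.card {x : ZMod j // x ≠ 0} = j - 1 := by
      have h1 := Fintype.card_subtype_compl (fun x : ZMod j => x = 0)
      simp only [Fintype.card_subtype_eq] at h1
      simpa [ZMod.card] using h1
    rw [Fintype.card_fun, Fintype.card_perm, Fintype.card_fin, hsub]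
  · intro P hP
    obtain ⟨σ, -, rfl⟩ := Finset.mem_image.mp hP
    have hmemP : ∀ S, S ∈ PaD j m k (σf σ) ↔ ∃ i : ZMod j, FnD j m k (σf σ) i = S := by
      intro S
      unfold PaD
      simp [Finset.mem_image]
    refine ⟨?_, ?_, ?_, ?_, ?_⟩
    · unfold PaD
      rw [Finset.card_image_of_injective _ (hFinj σ), Finset.card_univ, ZMod.card]
    · intro S hS T hT hST
      obtain ⟨i1, rfl⟩ := (hmemP S).mp hS
      obtain ⟨i2, rfl⟩ := (hmemP T).mp hT
      rw [Finset.disjoint_left]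
      intro z hz1 hz2
      obtain ⟨x1, -, hb1, hc1⟩ := (hmemF _ i1 _).mp hz1
      obtain ⟨x2, -, hb2, hc2⟩ := (hmemF _ i2 _).mp hz2
      have hx12 : x1 = x2 := by omega
      subst hx12
      exact hST (by rw [← hb1, ← hb2])
    · intro S hS
      obtain ⟨i1, rfl⟩ := (hmemP S).mp hS
      unfold FnD
      rw [Finset.card_image_of_injective _ hinj1]
      exact hcard σ i1
    · ext z
      simp only [Finset.mem_biUnion, id, Finset.mem_Icc]
      have hNc : ((2 * m * j ^ k : ℕ) : ℤ) = 2 * (m : ℤ) * (j : ℤ) ^ k := by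
        push_cast; ring
      constructor
      · rintro ⟨S, hS, hz⟩
        obtain ⟨i1, rfl⟩ := (hmemP S).mp hS
        obtain ⟨x1, hx1, -, rfl⟩ := (hmemF _ i1 _).mp hz
        have hc : ((x1 : ℕ) : ℤ) < ((2 * m * j ^ k : ℕ) : ℤ) := by exact_mod_cast hx1
        omega
      · rintro ⟨h1, h2⟩
        have hz0 : 0 ≤ z - 1 := by omega
        set x : ℕ := (z - 1).toNat with hxz
        have hx1 : ((x : ℕ) : ℤ) = z - 1 := Int.toNat_of_nonneg hz0
        have hx2 : x < 2 * m * j ^ k := by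
          have hc : ((x : ℕ) : ℤ) < ((2 * m * j ^ k : ℕ) : ℤ) := by omega
          exact_mod_cast hc
        refine ⟨FnD j m k (σf σ) (g j m k (σf σ) x), ?_, ?_⟩
        · exact (hmemP _).mpr ⟨_, rfl⟩
        · exact (hmemF _ _ _).mpr ⟨x, hx2, rfl, by omega⟩
    · intro r hr1 hrk S hS T hT
      obtain ⟨i1, rfl⟩ := (hmemP S).mp hS
      obtain ⟨i2, rfl⟩ := (hmemP T).mp hT
      have expand : ∀ i : ZMod j, ∑ z ∈ FnD j m k (σf σ) i, z ^ r
          = ∑ s ∈ Finset.range (r + 1),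
              (∑ x ∈ fibD j m k (σf σ) i, (x : ℤ) ^ s) * (r.choose s) := by
        intro i
        unfold FnD
        rw [Finset.sum_image (fun x _ y _ h => hinj1 h)]
        have hterm : ∀ x ∈ fibD j m k (σf σ) i, ((x : ℤ) + 1) ^ r
            = ∑ s ∈ Finset.range (r + 1), (x : ℤ) ^ s * (r.choose s) := by
          intro x _
          rw [add_pow]
          apply Finset.sum_congr rfl
          intro s _
          rw [one_pow, mul_one]
        rw [Finset.sum_congr rfl hterm, Finset.sum_comm]
        apply Finset.sum_congr rfl
        intro s _
        rw [Finset.sum_mul]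
      rw [expand i1, expand i2]
      apply Finset.sum_congr rfl
      intro s hs
      have hsk : s ≤ k := by
        have := Finset.mem_range.mp hs
        omega
      congr 1
      exact balanced (σf σ) (hσ0 σ) hj hm k hk le_rfl s hsk i1 i2
end

section
/- (Prouhet's theorem.) Let j ≥ 2 and k ≥ 1 be integers and set N = j^{k+1}. Then the first N consecutive positive integers 1, 2, …, N can be partitioned into j pairwise disjoint sets, each containing exactly j^k integers, such that for every exponent r = 1, 2, …, k the sum of the r-th powers of the members of each set is the same for all j sets. -/
open Finset

namespace Prouhet

/-- digit sum base j -/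
def dsum (j n : ℕ) : ℕ := (Nat.digits j n).sum

/-- the class of residues `< j^m` with digit sum ≡ v mod j -/
def Aset (j m : ℕ) (v : ZMod j) : Finset ℕ :=
  (Finset.range (j ^ m)).filter (fun n => ((dsum j n : ZMod j)) = v)

lemma dsum_mul_add (j : ℕ) (hj : 2 ≤ j) (q d : ℕ) (hd : d < j) :
    dsum j (j * q + d) = d + dsum j q := by
  rcases Nat.eq_zero_or_pos (j * q + d) with h | h
  · obtain ⟨h1, h2⟩ := Nat.add_eq_zero.mp h
    have hq : q = 0 := by
      rcases Nat.mul_eq_zero.mp h1 with h' | h' <;> omega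
    simp [hq, h2, dsum]
  · unfold dsum
    rw [Nat.digits_def' (by omega : 1 < j) h]
    have h1 : (j * q + d) % j = d := by
      rw [Nat.mul_add_mod]; exact Nat.mod_eq_of_lt hd
    have h2 : (j * q + d) / j = q := by
      rw [Nat.mul_add_div (by omega : 0 < j), Nat.div_eq_of_lt hd, Nat.add_zero]
    rw [h1, h2, List.sum_cons]

lemma sum_range_mul {M : Type*} [AddCommMonoid M] (j J : ℕ) (g : ℕ → M) :
    ∑ n ∈ range (j * J), g n = ∑ q ∈ range J, ∑ d ∈ range j, g (j * q + d) := by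
  induction J with
  | zero => simp
  | succ J ih =>
    rw [Nat.mul_succ, Finset.sum_range_add, ih, Finset.sum_range_succ]

lemma sum_range_zmod {M : Type*} [AddCommMonoid M] (j : ℕ) [NeZero j] (g : ZMod j → M) :
    ∑ d ∈ range j, g (d : ZMod j) = ∑ u : ZMod j, g u := by
  exact Finset.sum_nbij' (fun d => (d : ZMod j)) (fun u => u.val)
    (fun a _ => Finset.mem_univ _)
    (fun a _ => Finset.mem_range.mpr (ZMod.val_lt a))
    (fun a ha => ZMod.val_cast_of_lt (Finset.mem_range.mp ha))
    (fun a _ => ZMod.natCast_rightInverse a)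
    (fun a _ => rfl)

lemma sum_Aset_succ (j : ℕ) (hj : 2 ≤ j) (m : ℕ) (v : ZMod j) (f : ℕ → ℤ) :
    ∑ n ∈ Aset j (m + 1) v, f n
      = ∑ d ∈ range j, ∑ q ∈ Aset j m (v - (d : ZMod j)), f (j * q + d) := by
  rw [Aset, Finset.sum_filter]
  have hpow : j ^ (m + 1) = j * j ^ m := by ring
  rw [hpow, sum_range_mul]
  rw [Finset.sum_comm]
  apply Finset.sum_congr rfl
  intro d hd
  rw [Aset, Finset.sum_filter]
  apply Finset.sum_congr rfl
  intro q _
  have hcond : ((dsum j (j * q + d) : ZMod j) = v) ↔ ((dsum j q : ZMod j) = v - (d : ZMod j)) := by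
    rw [dsum_mul_add j hj q d (Finset.mem_range.mp hd)]
    push_cast
    constructor
    · intro h; rw [← h]; ring
    · intro h; rw [h]; ring
  simp only [hcond]

lemma step (j : ℕ) (hj : 2 ≤ j) (m r : ℕ) (v : ZMod j) :
    ∑ n ∈ Aset j (m + 1) v, (n : ℤ) ^ r
      = ∑ t ∈ range (r + 1), ∑ d ∈ range j,
          ((j : ℤ) ^ t * (d : ℤ) ^ (r - t) * (r.choose t)) *
            ∑ q ∈ Aset j m (v - (d : ZMod j)), (q : ℤ) ^ t := by
  rw [sum_Aset_succ j hj m v (fun n => ((n : ℤ)) ^ r)]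
  have h1 : ∀ d ∈ range j, ∑ q ∈ Aset j m (v - (d : ZMod j)), ((j * q + d : ℕ) : ℤ) ^ r
      = ∑ t ∈ range (r + 1), ((j : ℤ) ^ t * (d : ℤ) ^ (r - t) * (r.choose t)) *
          ∑ q ∈ Aset j m (v - (d : ZMod j)), (q : ℤ) ^ t := by
    intro d _
    have h2 : ∀ q ∈ Aset j m (v - (d : ZMod j)), ((j * q + d : ℕ) : ℤ) ^ r
        = ∑ t ∈ range (r + 1), ((j : ℤ) ^ t * (d : ℤ) ^ (r - t) * (r.choose t)) * (q : ℤ) ^ t := by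
      intro q _
      have hc : ((j * q + d : ℕ) : ℤ) = (j : ℤ) * (q : ℤ) + (d : ℤ) := by push_cast; ring
      rw [hc, add_pow]
      exact Finset.sum_congr rfl fun t _ => by rw [mul_pow]; ring
    rw [Finset.sum_congr rfl h2, Finset.sum_comm]
    exact Finset.sum_congr rfl fun t _ => (Finset.mul_sum _ _ _).symm
  rw [Finset.sum_congr rfl h1, Finset.sum_comm]

lemma key (j : ℕ) (hj : 2 ≤ j) :
    ∀ m r, r < m → ∀ v w : ZMod j,
      ∑ n ∈ Aset j m v, (n : ℤ) ^ r = ∑ n ∈ Aset j m w, (n : ℤ) ^ r := by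
  haveI : NeZero j := ⟨by omega⟩
  intro m
  induction m with
  | zero => intro r hr; exact absurd hr (Nat.not_lt_zero r)
  | succ m ih =>
    intro r hr v w
    rw [step j hj m r v, step j hj m r w]
    apply Finset.sum_congr rfl
    intro t ht
    rcases lt_or_eq_of_le (Nat.lt_succ_iff.mp (Finset.mem_range.mp ht)) with htr | htr
    · apply Finset.sum_congr rfl
      intro d _
      rw [ih t (by omega) (v - (d : ZMod j)) (w - (d : ZMod j))]
    · subst htr
      simp only [Nat.sub_self, pow_zero, mul_one, Nat.choose_self, Nat.cast_one]
      have H : ∀ u : ZMod j,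
          ∑ d ∈ range j, (j : ℤ) ^ t * ∑ q ∈ Aset j m (u - (d : ZMod j)), (q : ℤ) ^ t
            = ∑ x : ZMod j, (j : ℤ) ^ t * ∑ q ∈ Aset j m x, (q : ℤ) ^ t := by
        intro u
        rw [sum_range_zmod j (g := fun z => (j : ℤ) ^ t * ∑ q ∈ Aset j m (u - z), (q : ℤ) ^ t)]
        exact Fintype.sum_equiv (Equiv.subLeft u) _ _ (fun x => rfl)
      rw [H v, H w]

lemma key_shift (j : ℕ) (hj : 2 ≤ j) (m r : ℕ) (hr : r < m) (v w : ZMod j) :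
    ∑ n ∈ Aset j m v, ((n : ℤ) + 1) ^ r = ∑ n ∈ Aset j m w, ((n : ℤ) + 1) ^ r := by
  have expand : ∀ u : ZMod j, ∑ n ∈ Aset j m u, ((n : ℤ) + 1) ^ r
      = ∑ t ∈ range (r + 1), (r.choose t : ℤ) * ∑ n ∈ Aset j m u, (n : ℤ) ^ t := by
    intro u
    have h2 : ∀ n ∈ Aset j m u, ((n : ℤ) + 1) ^ r
        = ∑ t ∈ range (r + 1), (r.choose t : ℤ) * (n : ℤ) ^ t := by
      intro n _
      rw [add_pow]
      exact Finset.sum_congr rfl fun t _ => by ring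
    rw [Finset.sum_congr rfl h2, Finset.sum_comm]
    exact Finset.sum_congr rfl fun t _ => (Finset.mul_sum _ _ _).symm
  rw [expand v, expand w]
  exact Finset.sum_congr rfl fun t ht => by
    rw [key j hj m t (by have := Finset.mem_range.mp ht; omega) v w]

lemma card_Aset_eq (j : ℕ) (hj : 2 ≤ j) (m : ℕ) (hm : 1 ≤ m) (v w : ZMod j) :
    (Aset j m v).card = (Aset j m w).card := by
  have h := key j hj m 0 hm v w
  simp only [pow_zero, Finset.sum_const, nsmul_eq_mul, mul_one] at h
  exact_mod_cast h

lemma sum_card (j : ℕ) [NeZero j] (hj : 2 ≤ j) (m : ℕ) :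
    ∑ u : ZMod j, (Aset j m u).card = j ^ m := by
  have h := Finset.card_eq_sum_card_fiberwise
    (f := fun n => ((dsum j n : ZMod j))) (s := range (j ^ m)) (t := Finset.univ)
    (fun x _ => Finset.mem_univ _)
  rw [Finset.card_range] at h
  simpa [Aset] using h.symm

lemma card_Aset (j : ℕ) (hj : 2 ≤ j) (m : ℕ) (hm : 1 ≤ m) (v : ZMod j) :
    (Aset j m v).card = j ^ (m - 1) := by
  haveI : NeZero j := ⟨by omega⟩
  have h1 : ∑ u : ZMod j, (Aset j m u).card = j * (Aset j m v).card := by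
    rw [Finset.sum_congr rfl (fun u _ => card_Aset_eq j hj m hm u v), Finset.sum_const,
      Finset.card_univ, ZMod.card, smul_eq_mul]
  rw [sum_card j hj m] at h1
  obtain ⟨m', rfl⟩ : ∃ m', m = m' + 1 := ⟨m - 1, by omega⟩
  have h2 : j ^ (m' + 1) = j * j ^ m' := by ring
  rw [h2] at h1
  simpa using (Nat.eq_of_mul_eq_mul_left (by omega) h1).symm

end Prouhet

/-- **Theorem 8 (Prouhet's theorem).** For integers `j ≥ 2` and `k ≥ 1`, with
`N = j ^ (k + 1)`, the integers `1, 2, …, N` can be partitioned into `j` pairwise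
disjoint sets of `j ^ k` integers each, such that for every exponent `r = 1, …, k`
the sums of the `r`-th powers of the members of the `j` sets all agree. -/
theorem prouhet_multigrade_partition (j k : ℕ) (hj : 2 ≤ j) (hk : 1 ≤ k) :
    ∃ A : Fin j → Finset ℤ,
      (∀ v w : Fin j, v ≠ w → Disjoint (A v) (A w)) ∧
      (∀ v : Fin j, (A v).card = j ^ k) ∧
      (Finset.univ.biUnion A = Finset.Icc (1 : ℤ) ((j : ℤ) ^ (k + 1))) ∧
      (∀ r : ℕ, 1 ≤ r → r ≤ k → ∀ v w : Fin j,
        ∑ x ∈ A v, x ^ r = ∑ x ∈ A w, x ^ r) := by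
  haveI : NeZero j := ⟨by omega⟩
  have hfin : ∀ v w : Fin j, ((v : ℕ) : ZMod j) = ((w : ℕ) : ZMod j) → v = w := by
    intro v w h
    have h2 := congrArg ZMod.val h
    rw [ZMod.val_cast_of_lt v.isLt, ZMod.val_cast_of_lt w.isLt] at h2
    exact Fin.ext h2
  have hcastpow : ((j ^ (k + 1) : ℕ) : ℤ) = (j : ℤ) ^ (k + 1) := by push_cast; ring
  refine ⟨fun v => (Prouhet.Aset j (k + 1) ((v : ℕ) : ZMod j)).image (fun n : ℕ => (n : ℤ) + 1),
    ?_, ?_, ?_, ?_⟩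
  · intro v w hvw
    rw [Finset.disjoint_left]
    rintro x hx hx'
    obtain ⟨n, hn, rfl⟩ := Finset.mem_image.mp hx
    obtain ⟨n', hn', he⟩ := Finset.mem_image.mp hx'
    have hnn : n' = n := by
      have : (n' : ℤ) = (n : ℤ) := by omega
      exact_mod_cast this
    subst hnn
    simp only [Prouhet.Aset, Finset.mem_filter] at hn hn'
    exact hvw (hfin v w (hn.2.symm.trans hn'.2))
  · intro v
    rw [Finset.card_image_of_injective _ (fun a b h => by
      have : (a : ℤ) = (b : ℤ) := by omega
      exact_mod_cast this)]
    simpa using Prouhet.card_Aset j hj (k + 1) (by omega) _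
  · ext x
    simp only [Finset.mem_biUnion, Finset.mem_univ, true_and, Finset.mem_image,
      Finset.mem_Icc]
    constructor
    · rintro ⟨v, n, hn, rfl⟩
      simp only [Prouhet.Aset, Finset.mem_filter, Finset.mem_range] at hn
      have : n < j ^ (k + 1) := hn.1
      omega
    · rintro ⟨h1, h2⟩
      set n : ℕ := (x - 1).toNat with hndef
      have hx1 : (n : ℤ) = x - 1 := Int.toNat_of_nonneg (by omega)
      have hlt : n < j ^ (k + 1) := by omega
      refine ⟨⟨(((Prouhet.dsum j n : ZMod j)).val), ZMod.val_lt _⟩, n, ?_, by omega⟩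
      simp only [Prouhet.Aset, Finset.mem_filter, Finset.mem_range]
      exact ⟨hlt, (ZMod.natCast_rightInverse _).symm⟩
  · intro r hr1 hrk v w
    rw [Finset.sum_image (fun a _ b _ h => by
        have : (a : ℤ) = (b : ℤ) := by omega
        exact_mod_cast this),
      Finset.sum_image (fun a _ b _ h => by
        have : (a : ℤ) = (b : ℤ) := by omega
        exact_mod_cast this)]
    exact Prouhet.key_shift j hj (k + 1) r (by omega) _ _
end

section
/- Let j ≥ 2 and k ≥ 1 be integers and set N = j^{k+1}. Then there exist at least ((j−1)!)^{k−1} distinct partitions of {1, 2, …, N} into j pairwise disjoint sets of j^k integers each, such that in each partition, for every exponent r = 1, 2, …, k, the sum of the r-th powers of the members of each set is the same for all j sets. (Two partitions are distinct if they differ as unordered families of sets.) -/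
/-!
Label each `0 ≤ n < j ^ m` by `∑ i, σ i (nᵢ) ∈ ZMod j`, where `nᵢ` are the base-`j` digits of `n`
and the `σ i` are permutations of `ZMod j`; the fibres of the labelling, shifted by one, are the
`j` blocks. Splitting off the top digit `d`, the fibre of `c` at level `m + 1` is the union over
`d` of `d * j ^ m +` (fibre of `c - σ m d` at level `m`). For a polynomial `p` of degree `≤ m`,
`p (a + d * j ^ m) - p a` has degree `< m` and is handled by induction, while summing `p` over the
fibres of `c - σ m d` for all `d` sums it over all fibres, whatever `c` is.

If `σ 0 = 1` and every `σ i` fixes `0`, the block containing `v * j ^ i + 1` has label `σ i v`, and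
the labels themselves are recovered from the blocks containing `1, …, j`. So the partition
determines the `σ i`, giving `((j - 1)!) ^ k` distinct partitions.
-/

open Finset Polynomial

namespace Prouhet

variable {j : ℕ}

/-- The cast to `ZMod j` reduces `n / j ^ i` to the `i`-th base-`j` digit of `n`. -/
def digitClass (σ : ℕ → Equiv.Perm (ZMod j)) (m n : ℕ) : ZMod j :=
  ∑ i ∈ range m, σ i ((n / j ^ i : ℕ) : ZMod j)

def classSet (σ : ℕ → Equiv.Perm (ZMod j)) (m : ℕ) (c : ZMod j) : Finset ℕ :=
  {n ∈ range (j ^ m) | digitClass σ m n = c}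

lemma digitClass_add_mul_pow [NeZero j] (σ : ℕ → Equiv.Perm (ZMod j)) {m a : ℕ}
    (ha : a < j ^ m) (d : ℕ) :
    digitClass σ (m + 1) (a + d * j ^ m) = digitClass σ m a + σ m d := by
  have hj : 0 < j := NeZero.pos j
  rw [digitClass, sum_range_succ, Nat.add_mul_div_right _ _ (by positivity), Nat.div_eq_of_lt ha,
    zero_add]
  congr 1
  refine sum_congr rfl fun i hi => ?_
  have hi : i < m := mem_range.1 hi
  have hsplit : (a + d * j ^ m) / j ^ i = a / j ^ i + d * j ^ (m - i - 1) * j := by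
    rw [mul_assoc, ← pow_succ, ← Nat.add_mul_div_right _ _ (by positivity : 0 < j ^ i),
      mul_assoc, ← pow_add, Nat.sub_add_cancel (by omega), Nat.sub_add_cancel hi.le]
  rw [hsplit]
  simp

lemma mul_pow_lt_pow_of_lt {v i m : ℕ} (hv : v < j) (hi : i < m) : v * j ^ i < j ^ m :=
  calc v * j ^ i < j * j ^ i := Nat.mul_lt_mul_of_pos_right hv (pow_pos (Nat.zero_lt_of_lt hv) i)
    _ = j ^ (i + 1) := (pow_succ' j i).symm
    _ ≤ j ^ m := Nat.pow_le_pow_right (Nat.zero_lt_of_lt hv) hi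

lemma sum_range_mul_eq_sum_sum {M : Type*} [AddCommMonoid M] (f : ℕ → M) (L : ℕ) : ∀ q : ℕ,
    ∑ n ∈ range (L * q), f n = ∑ d ∈ range q, ∑ a ∈ range L, f (a + d * L)
  | 0 => by simp
  | q + 1 => by
    rw [mul_add_one, sum_range_add, sum_range_mul_eq_sum_sum f L q, sum_range_succ]
    simp only [add_comm, mul_comm]

lemma sum_range_natCast_eq_sum_zmod {M : Type*} [AddCommMonoid M] [NeZero j]
    (G : ZMod j → M) : ∑ d ∈ range j, G d = ∑ x, G x :=
  sum_nbij' (fun d => (d : ZMod j)) ZMod.val (by simp) (by simp [ZMod.val_lt])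
    (fun d hd => ZMod.val_cast_of_lt (mem_range.1 hd)) (fun x _ => ZMod.natCast_zmod_val x)
    (fun _ _ => rfl)

lemma degree_taylor_sub_lt {R : Type*} [CommRing R] {p : R[X]} {m : ℕ}
    (hp : p.degree < (m + 1 : ℕ)) (r : R) : (taylor r p - p).degree < m := by
  rcases eq_or_ne p 0 with rfl | hp0
  · simp
  calc (taylor r p - p).degree < (taylor r p).degree :=
        degree_sub_lt_left (degree_taylor p r) (by rwa [Ne, taylor_eq_zero])
          (leadingCoeff_taylor r p)
    _ = p.degree := degree_taylor p r
    _ ≤ m := Order.le_of_lt_succ hp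

section

variable [NeZero j] (σ : ℕ → Equiv.Perm (ZMod j))

lemma sum_classSet_succ {M : Type*} [AddCommMonoid M] (f : ℕ → M) (m : ℕ) (c : ZMod j) :
    ∑ n ∈ classSet σ (m + 1) c, f n =
      ∑ d ∈ range j, ∑ a ∈ classSet σ m (c - σ m d), f (a + d * j ^ m) := by
  rw [classSet, sum_filter, pow_succ, sum_range_mul_eq_sum_sum]
  refine sum_congr rfl fun d _ => ?_
  rw [classSet, sum_filter]
  refine sum_congr rfl fun a ha => ?_
  simp_rw [digitClass_add_mul_pow σ (mem_range.1 ha), eq_sub_iff_add_eq]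

theorem sum_eval_classSet_eq {R : Type*} [CommRing R] {m : ℕ} {p : R[X]} (hp : p.degree < m)
    (c c' : ZMod j) :
    ∑ n ∈ classSet σ m c, p.eval (n : R) = ∑ n ∈ classSet σ m c', p.eval (n : R) := by
  induction m generalizing p c c' with
  | zero =>
    obtain rfl : p = 0 := by simpa using hp
    simp
  | succ m ih =>
    suffices key : ∀ e, ∑ n ∈ classSet σ (m + 1) e, p.eval (n : R) =
        ∑ d ∈ range j, ∑ a ∈ classSet σ m 0, (taylor ((d * j ^ m : ℕ) : R) p - p).eval (a : R) +
          ∑ x, ∑ a ∈ classSet σ m x, p.eval (a : R) by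
      rw [key, key]
    intro e
    have hshift (a d : ℕ) : p.eval ((a + d * j ^ m : ℕ) : R) =
        (taylor ((d * j ^ m : ℕ) : R) p - p).eval (a : R) + p.eval (a : R) := by
      simp [taylor_eval]
    simp only [sum_classSet_succ, hshift, sum_add_distrib]
    congr 1
    · exact sum_congr rfl fun d _ => ih (degree_taylor_sub_lt hp _) _ _
    · rw [sum_range_natCast_eq_sum_zmod (fun x => ∑ a ∈ classSet σ m (e - σ m x), p.eval (a : R))]
      exact ((σ m).trans (Equiv.subLeft e)).sum_comp
        (fun x => ∑ a ∈ classSet σ m x, p.eval (a : R))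

theorem card_classSet (m : ℕ) (c : ZMod j) : #(classSet σ (m + 1) c) = j ^ m := by
  have hall : ∀ x, #(classSet σ (m + 1) x) = #(classSet σ (m + 1) c) := fun x => by
    simpa using sum_eval_classSet_eq σ (p := (1 : ℤ[X]))
      (by rw [degree_one]; exact_mod_cast m.succ_pos) x c
  have htotal : ∑ x, #(classSet σ (m + 1) x) = j ^ (m + 1) :=
    (card_eq_sum_card_fiberwise (f := digitClass σ (m + 1)) (t := univ) (by simp)).symm.trans
      (card_range _)
  simp only [hall, sum_const, card_univ, ZMod.card, smul_eq_mul, pow_succ'] at htotal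
  exact Nat.eq_of_mul_eq_mul_left (NeZero.pos j) htotal

def block (m : ℕ) (c : ZMod j) : Finset ℤ :=
  (classSet σ m c).map (Nat.castEmbedding.trans (addRightEmbedding 1))

def prouhetPartition (m : ℕ) : Finset (Finset ℤ) :=
  univ.image (block σ m)

lemma block_injective (m : ℕ) : Function.Injective (block σ (m + 1)) := by
  intro c c' h
  obtain ⟨n, hn⟩ : (classSet σ (m + 1) c).Nonempty := by
    rw [← card_pos, card_classSet]; exact pow_pos (NeZero.pos j) m
  have hn' : n ∈ classSet σ (m + 1) c' := map_injective _ h ▸ hn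
  simp only [classSet, mem_filter] at hn hn'
  exact hn.2.symm.trans hn'.2

theorem card_prouhetPartition (m : ℕ) : #(prouhetPartition σ (m + 1)) = j := by
  rw [prouhetPartition, card_image_of_injective _ (block_injective σ m), card_univ, ZMod.card]

lemma mem_prouhetPartition {m : ℕ} {S : Finset ℤ} :
    S ∈ prouhetPartition σ m ↔ ∃ c, block σ m c = S := by
  simp [prouhetPartition]

theorem disjoint_of_mem_prouhetPartition {m : ℕ} {S T : Finset ℤ} (hS : S ∈ prouhetPartition σ m)
    (hT : T ∈ prouhetPartition σ m) (hST : S ≠ T) : Disjoint S T := by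
  obtain ⟨c, rfl⟩ := (mem_prouhetPartition σ).1 hS
  obtain ⟨c', rfl⟩ := (mem_prouhetPartition σ).1 hT
  rw [block, block, disjoint_map, classSet, classSet, disjoint_filter]
  rintro n - rfl rfl
  exact hST rfl

theorem card_of_mem_prouhetPartition {m : ℕ} {S : Finset ℤ}
    (hS : S ∈ prouhetPartition σ (m + 1)) : #S = j ^ m := by
  obtain ⟨c, rfl⟩ := (mem_prouhetPartition σ).1 hS
  rw [block, card_map, card_classSet]

theorem biUnion_prouhetPartition (m : ℕ) :
    (prouhetPartition σ m).biUnion id = Icc (1 : ℤ) ((j : ℤ) ^ m) := by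
  ext x
  simp only [prouhetPartition, mem_biUnion, mem_image, mem_univ, block, classSet, true_and, id_eq,
    exists_exists_eq_and, mem_map, mem_filter, mem_range, Function.Embedding.trans_apply,
    Nat.castEmbedding_apply, addRightEmbedding_apply, mem_Icc]
  constructor
  · rintro ⟨-, n, ⟨hn, -⟩, rfl⟩
    exact ⟨by omega, by exact_mod_cast Nat.succ_le_of_lt hn⟩
  · rintro ⟨h1, h2⟩
    refine ⟨_, (x - 1).toNat, ⟨?_, rfl⟩, by omega⟩
    have : ((x - 1).toNat : ℤ) < (j : ℤ) ^ m := by omega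
    exact_mod_cast this

theorem sum_eval_block_eq {m : ℕ} {p : ℤ[X]} (hp : p.degree < m) (c c' : ZMod j) :
    ∑ x ∈ block σ m c, p.eval x = ∑ x ∈ block σ m c', p.eval x := by
  simpa [block, taylor_eval] using
    sum_eval_classSet_eq σ (p := taylor 1 p) (by rwa [degree_taylor]) c c'

theorem sum_pow_eq_of_mem_prouhetPartition {m r : ℕ} (hr : r < m) {S T : Finset ℤ}
    (hS : S ∈ prouhetPartition σ m) (hT : T ∈ prouhetPartition σ m) :
    ∑ x ∈ S, x ^ r = ∑ x ∈ T, x ^ r := by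
  obtain ⟨c, rfl⟩ := (mem_prouhetPartition σ).1 hS
  obtain ⟨c', rfl⟩ := (mem_prouhetPartition σ).1 hT
  simpa using sum_eval_block_eq σ (p := X ^ r) (by rw [degree_X_pow]; exact_mod_cast hr) c c'

def IsNormalized : Prop := σ 0 = 1 ∧ ∀ i, σ i 0 = 0

variable {σ}

lemma digitClass_mul_pow (hσ : ∀ t, σ t 0 = 0) {v i m : ℕ} (hv : v < j) (hi : i < m) :
    digitClass σ m (v * j ^ i) = σ i v := by
  have hj := NeZero.pos j
  rw [digitClass, sum_eq_single_of_mem i (mem_range.2 hi), Nat.mul_div_cancel _ (by positivity)]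
  intro t _ hti
  suffices ((v * j ^ i / j ^ t : ℕ) : ZMod j) = 0 by rw [this, hσ]
  rcases lt_or_gt_of_ne hti with hti | hti
  · have : v * j ^ i = v * j ^ (i - t - 1) * j * j ^ t := by
      rw [mul_assoc v, mul_assoc v, ← pow_succ, ← pow_add]
      congr 2
      omega
    rw [this, Nat.mul_div_cancel _ (by positivity)]
    simp
  · rw [Nat.div_eq_of_lt (mul_pow_lt_pow_of_lt hv hti), Nat.cast_zero]

lemma digitClass_natCast_val (hσ : IsNormalized σ) {m : ℕ} (hm : 1 ≤ m) (c : ZMod j) :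
    digitClass σ m c.val = c := by
  simpa [hσ.1] using digitClass_mul_pow hσ.2 c.val_lt hm

theorem digitClass_eq_of_prouhetPartition_eq {σ' : ℕ → Equiv.Perm (ZMod j)}
    (hσ : IsNormalized σ) (hσ' : IsNormalized σ') {m : ℕ} (hm : 1 ≤ m)
    (h : prouhetPartition σ m = prouhetPartition σ' m) {n : ℕ} (hn : n < j ^ m) :
    digitClass σ m n = digitClass σ' m n := by
  set c := digitClass σ m n
  have hblock : block σ m c ∈ prouhetPartition σ' m := h ▸ mem_image_of_mem _ (mem_univ c)
  obtain ⟨c', hc'⟩ := (mem_prouhetPartition σ').1 hblock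
  have hclass : classSet σ' m c' = classSet σ m c := map_injective _ hc'
  have hmem {x : ℕ} (hx : x < j ^ m) (hxc : digitClass σ m x = c) : digitClass σ' m x = c' := by
    have : x ∈ classSet σ m c := mem_filter.2 ⟨mem_range.2 hx, hxc⟩
    rw [← hclass] at this
    exact (mem_filter.1 this).2
  have hval : c.val < j ^ m := c.val_lt.trans_le (Nat.le_self_pow (by omega) j)
  have hcc' : c' = c := by
    rw [← hmem hval (digitClass_natCast_val hσ hm c), digitClass_natCast_val hσ' hm c]
  rw [hmem hn rfl, hcc']

theorem eq_of_prouhetPartition_eq {σ' : ℕ → Equiv.Perm (ZMod j)}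
    (hσ : IsNormalized σ) (hσ' : IsNormalized σ') {m : ℕ}
    (h : prouhetPartition σ m = prouhetPartition σ' m) {i : ℕ} (hi : i < m) : σ i = σ' i := by
  ext x
  have := digitClass_eq_of_prouhetPartition_eq hσ hσ' (by omega) h
    (mul_pow_lt_pow_of_lt x.val_lt hi)
  rwa [digitClass_mul_pow hσ.2 x.val_lt hi, digitClass_mul_pow hσ'.2 x.val_lt hi,
    ZMod.natCast_zmod_val] at this

end

def digitPerms {k : ℕ} (f : Fin k → Equiv.Perm {x : ZMod j // x ≠ 0}) :
    ℕ → Equiv.Perm (ZMod j)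
  | 0 => 1
  | i + 1 => if h : i < k then Equiv.Perm.ofSubtype (f ⟨i, h⟩) else 1

lemma isNormalized_digitPerms {k : ℕ} (f : Fin k → Equiv.Perm {x : ZMod j // x ≠ 0}) :
    IsNormalized (digitPerms f) := by
  refine ⟨rfl, fun i => ?_⟩
  cases i with
  | zero => rfl
  | succ i =>
    simp only [digitPerms]
    split_ifs
    · exact Equiv.Perm.ofSubtype_apply_of_not_mem _ (not_not.2 rfl)
    · rfl

theorem prouhetPartition_digitPerms_injective [NeZero j] (k : ℕ) :
    Function.Injective fun f : Fin k → Equiv.Perm {x : ZMod j // x ≠ 0} =>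
      prouhetPartition (digitPerms f) (k + 1) := by
  intro f f' h
  funext i
  apply Equiv.Perm.ofSubtype_injective
  simpa [digitPerms] using eq_of_prouhetPartition_eq (isNormalized_digitPerms f)
    (isNormalized_digitPerms f') h (i := i + 1) (by omega)

end Prouhet

theorem prouhet_multigrade_partition_count_general (j k : ℕ) (hj : 2 ≤ j) :
    ∃ Ps : Finset (Finset (Finset ℤ)),
      (Nat.factorial (j - 1)) ^ (k - 1) ≤ Ps.card ∧
      ∀ P ∈ Ps,
        P.card = j ∧
        (∀ S ∈ P, ∀ T ∈ P, S ≠ T → Disjoint S T) ∧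
        (∀ S ∈ P, S.card = j ^ k) ∧
        (P.biUnion id = Finset.Icc (1 : ℤ) ((j : ℤ) ^ (k + 1))) ∧
        (∀ r : ℕ, 1 ≤ r → r ≤ k → ∀ S ∈ P, ∀ T ∈ P,
          ∑ x ∈ S, x ^ r = ∑ x ∈ T, x ^ r) := by
  have : NeZero j := ⟨by omega⟩
  refine ⟨univ.image fun f : Fin k → Equiv.Perm {x : ZMod j // x ≠ 0} =>
    Prouhet.prouhetPartition (Prouhet.digitPerms f) (k + 1), ?_, ?_⟩
  · rw [card_image_of_injective _ (Prouhet.prouhetPartition_digitPerms_injective k), card_univ]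
    simp only [Fintype.card_fun, Fintype.card_perm, Fintype.card_subtype_compl, ZMod.card,
      Fintype.card_fin]
    exact Nat.pow_le_pow_right (Nat.factorial_pos _) (Nat.sub_le k 1)
  · simp only [mem_image, mem_univ, true_and]
    rintro _ ⟨f, rfl⟩
    exact ⟨Prouhet.card_prouhetPartition _ k,
      fun S hS T hT => Prouhet.disjoint_of_mem_prouhetPartition _ hS hT,
      fun S hS => Prouhet.card_of_mem_prouhetPartition _ hS,
      Prouhet.biUnion_prouhetPartition _ _,
      fun r _ hr S hS T hT => Prouhet.sum_pow_eq_of_mem_prouhetPartition _ (by omega) hS hT⟩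

/-- **Theorem 8.** For integers `j ≥ 2` and `k ≥ 1`, with `N = j ^ (k + 1)`, there are
at least `((j-1)!)^(k-1)` distinct partitions (as unordered families of sets, encoded as
a `Finset` of partitions, each partition itself a `Finset` of `j` sets) of `{1, …, N}`
into `j` pairwise disjoint sets of `j ^ k` integers each, such that in each partition the
sums of the `r`-th powers of the members of the `j` sets agree for `r = 1, …, k`. -/
theorem prouhet_multigrade_partition_count (j k : ℕ) (hj : 2 ≤ j) (hk : 1 ≤ k) :
    ∃ Ps : Finset (Finset (Finset ℤ)),
      (Nat.factorial (j - 1)) ^ (k - 1) ≤ Ps.card ∧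
      ∀ P ∈ Ps,
        P.card = j ∧
        (∀ S ∈ P, ∀ T ∈ P, S ≠ T → Disjoint S T) ∧
        (∀ S ∈ P, S.card = j ^ k) ∧
        (P.biUnion id = Finset.Icc (1 : ℤ) ((j : ℤ) ^ (k + 1))) ∧
        (∀ r : ℕ, 1 ≤ r → r ≤ k → ∀ S ∈ P, ∀ T ∈ P,
          ∑ x ∈ S, x ^ r = ∑ x ∈ T, x ^ r) :=
  prouhet_multigrade_partition_count_general j k hj
end

section
/- For any integers j ≥ 2 and k ≥ 1, N(k, j) ≤ 2j^k; that is, there exists a positive integer N with N ≤ 2j^k such that {1, 2, …, N} can be partitioned into j pairwise disjoint sets of equal cardinality N/j whose members have equal sums of r-th powers for every r = 1, 2, …, k. -/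
/-- `IsMultigradePartitionable k j N` says that `{1, 2, …, N}` can be partitioned into
`j` pairwise disjoint sets of equal cardinality `s = N / j` (so `N = j * s`) such that
for every `r = 1, …, k` the sums of the `r`-th powers of the members of the `j` sets
are all equal.  `N (k, j)` of the paper is the least positive `N` with this property. -/
def IsMultigradePartitionable (k j N : ℕ) : Prop :=
  ∃ s : ℕ, N = j * s ∧
    ∃ A : Fin j → Finset ℤ,
      (∀ v w : Fin j, v ≠ w → Disjoint (A v) (A w)) ∧
      (∀ v : Fin j, (A v).card = s) ∧
      (Finset.univ.biUnion A = Finset.Icc (1 : ℤ) (N : ℤ)) ∧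
      (∀ r : ℕ, 1 ≤ r → r ≤ k → ∀ v w : Fin j,
        ∑ x ∈ A v, x ^ r = ∑ x ∈ A w, x ^ r)

lemma mgp_base (j : ℕ) (hj : 2 ≤ j) : IsMultigradePartitionable 1 j (2 * j) := by
  refine ⟨2, by ring, fun v => {((v : ℕ) : ℤ) + 1, 2 * (j : ℤ) - (v : ℕ)}, ?_, ?_, ?_, ?_⟩
  · intro v w hvw
    have hv : ((v : ℕ) : ℤ) < j := by exact_mod_cast v.isLt
    have hw : ((w : ℕ) : ℤ) < j := by exact_mod_cast w.isLt
    have hne : ((v : ℕ) : ℤ) ≠ ((w : ℕ) : ℤ) := fun h =>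
      hvw (Fin.ext (by exact_mod_cast h))
    simp only [Finset.disjoint_left, Finset.mem_insert, Finset.mem_singleton]
    rintro a (rfl | rfl) (h | h) <;> omega
  · intro v
    have hv : ((v : ℕ) : ℤ) < j := by exact_mod_cast v.isLt
    rw [Finset.card_insert_of_notMem (by simp only [Finset.mem_singleton]; omega)]
    simp
  · ext x
    simp only [Finset.mem_biUnion, Finset.mem_univ, true_and, Finset.mem_insert,
      Finset.mem_singleton, Finset.mem_Icc]
    constructor
    · rintro ⟨v, (rfl | rfl)⟩ <;>
      · have hv : ((v : ℕ) : ℤ) < j := by exact_mod_cast v.isLt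
        have hv0 : (0 : ℤ) ≤ ((v : ℕ) : ℤ) := Int.ofNat_nonneg _
        push_cast
        omega
    · rintro ⟨h1, h2⟩
      by_cases hx : x ≤ (j : ℤ)
      · refine ⟨⟨(x - 1).toNat, ?_⟩, Or.inl ?_⟩
        · omega
        · simp only [Fin.val_mk]
          omega
      · refine ⟨⟨(2 * j - x).toNat, ?_⟩, Or.inr ?_⟩
        · push_cast at h2 ⊢
          omega
        · simp only [Fin.val_mk]
          push_cast at h2 ⊢
          omega
  · intro r hr1 hr2 v w
    interval_cases r
    have hv : ((v : ℕ) : ℤ) < j := by exact_mod_cast v.isLt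
    have hw : ((w : ℕ) : ℤ) < j := by exact_mod_cast w.isLt
    rw [Finset.sum_pair (by omega), Finset.sum_pair (by omega)]
    ring

lemma mgp_step (j k N : ℕ) (hj : 2 ≤ j) (hN : 0 < N)
    (h : IsMultigradePartitionable k j N) :
    IsMultigradePartitionable (k + 1) j (j * N) := by
  obtain ⟨s, hNs, A, hdisj, hcard, hunion, hsum⟩ := h
  haveI : NeZero j := ⟨by omega⟩
  have hNz : (0 : ℤ) < (N : ℤ) := by exact_mod_cast hN
  -- every member of every part lies in [1, N]
  have hbound : ∀ u : Fin j, ∀ a ∈ A u, 1 ≤ a ∧ a ≤ (N : ℤ) := by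
    intro u a ha
    have : a ∈ Finset.univ.biUnion A :=
      Finset.mem_biUnion.2 ⟨u, Finset.mem_univ u, ha⟩
    rw [hunion] at this
    simpa using Finset.mem_Icc.1 this
  -- block uniqueness
  have hblk : ∀ (a b t t' : ℤ), 1 ≤ a → a ≤ (N : ℤ) → 1 ≤ b → b ≤ (N : ℤ) →
      a + t * N = b + t' * N → t = t' ∧ a = b := by
    intro a b t t' h1 h2 h3 h4 heq
    have ht : t = t' := by
      by_contra hne
      rcases lt_or_gt_of_ne hne with hlt | hlt
      · have : (t + 1) * (N : ℤ) ≤ t' * N :=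
          mul_le_mul_of_nonneg_right (by omega) (le_of_lt hNz)
        nlinarith
      · have : (t' + 1) * (N : ℤ) ≤ t * N :=
          mul_le_mul_of_nonneg_right (by omega) (le_of_lt hNz)
        nlinarith
    subst ht
    exact ⟨rfl, by linarith⟩
  -- the blocks
  set C : Fin j → Fin j → Finset ℤ :=
    fun v t => (A (v + t)).image (fun a => a + ((t : ℕ) : ℤ) * N) with hC
  set B : Fin j → Finset ℤ := fun v => Finset.univ.biUnion (C v) with hB
  have hmemC : ∀ v t x, x ∈ C v t ↔ ∃ a ∈ A (v + t), a + ((t : ℕ) : ℤ) * N = x := by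
    intro v t x
    simp only [hC, Finset.mem_image]
  have hCdisj : ∀ v w : Fin j, ∀ t t' : Fin j,
      (t ≠ t' ∨ v ≠ w) → Disjoint (C v t) (C w t') := by
    intro v w t t' hne
    rw [Finset.disjoint_left]
    intro x hx hx'
    obtain ⟨a, ha, rfl⟩ := (hmemC v t x).1 hx
    obtain ⟨b, hb, heq⟩ := (hmemC w t' _).1 hx'
    obtain ⟨ha1, ha2⟩ := hbound _ a ha
    obtain ⟨hb1, hb2⟩ := hbound _ b hb
    obtain ⟨htt, hab⟩ := hblk b a _ _ hb1 hb2 ha1 ha2 heq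
    have htt' : t' = t := Fin.ext (by exact_mod_cast htt)
    rw [htt'] at hb
    subst hab
    rcases hne with hne | hne
    · exact hne htt'.symm
    · have hvw : v + t ≠ w + t := fun hh => hne (add_right_cancel hh)
      exact (Finset.disjoint_left.1 (hdisj _ _ hvw) ha) hb
  have hCcard : ∀ v t, (C v t).card = s := by
    intro v t
    rw [hC]
    rw [Finset.card_image_of_injective _ (add_left_injective _)]
    exact hcard _
  refine ⟨N, rfl, B, ?_, ?_, ?_, ?_⟩
  · -- disjointness of the new parts
    intro v w hvw
    rw [hB]
    simp only [Finset.disjoint_left, Finset.mem_biUnion, Finset.mem_univ, true_and]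
    rintro x ⟨t, hx⟩ ⟨t', hx'⟩
    exact (Finset.disjoint_left.1 (hCdisj v w t t' (Or.inr hvw)) hx) hx'
  · -- cardinality
    intro v
    rw [hB, Finset.card_biUnion (fun t _ t' _ hne => hCdisj v v t t' (Or.inl hne))]
    simp [hCcard, hNs]
  · -- union
    ext x
    simp only [hB, Finset.mem_biUnion, Finset.mem_univ, true_and, Finset.mem_Icc]
    constructor
    · rintro ⟨v, t, hx⟩
      obtain ⟨a, ha, rfl⟩ := (hmemC v t x).1 hx
      obtain ⟨ha1, ha2⟩ := hbound _ a ha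
      have ht : ((t : ℕ) : ℤ) ≤ (j : ℤ) - 1 := by
        have := t.isLt
        have : ((t : ℕ) : ℤ) < (j : ℤ) := by exact_mod_cast this
        omega
      have ht0 : (0 : ℤ) ≤ ((t : ℕ) : ℤ) := Int.ofNat_nonneg _
      constructor
      · nlinarith
      · have h1 : ((t : ℕ) : ℤ) * N ≤ ((j : ℤ) - 1) * N :=
          mul_le_mul_of_nonneg_right ht (le_of_lt hNz)
        push_cast
        nlinarith
    · rintro ⟨h1, h2⟩
      have h2' : x ≤ (j : ℤ) * N := by push_cast at h2; linarith
      set tz : ℤ := (x - 1) / (N : ℤ) with htz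
      have ht0 : 0 ≤ tz := Int.ediv_nonneg (by omega) (le_of_lt hNz)
      have htj : tz < (j : ℤ) := by
        rw [htz, Int.ediv_lt_iff_lt_mul hNz]
        nlinarith
      set a : ℤ := (x - 1) % (N : ℤ) + 1 with haz
      have ha1 : 1 ≤ a := by
        have := Int.emod_nonneg (x - 1) (ne_of_gt hNz)
        omega
      have ha2 : a ≤ (N : ℤ) := by
        have := Int.emod_lt_of_pos (x - 1) hNz
        omega
      have hxa : x = a + tz * N := by
        have := Int.mul_ediv_add_emod (x - 1) (N : ℤ)
        rw [haz, htz]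
        linarith [this, mul_comm (N : ℤ) ((x - 1) / (N : ℤ))]
      have hamem : a ∈ Finset.univ.biUnion A := by
        rw [hunion]; exact Finset.mem_Icc.2 ⟨ha1, ha2⟩
      obtain ⟨u, _, hu⟩ := Finset.mem_biUnion.1 hamem
      have htjn : tz.toNat < j := by omega
      set t : Fin j := ⟨tz.toNat, htjn⟩ with htdef
      have htcast : ((t : ℕ) : ℤ) = tz := by
        simp [htdef]
        omega
      refine ⟨u - t, t, (hmemC (u - t) t x).2 ⟨a, ?_, ?_⟩⟩
      · rwa [sub_add_cancel]
      · rw [htcast]; omega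
  · -- equal power sums
    intro m hm1 hm2 v w
    have hPW : ∀ v : Fin j, Set.PairwiseDisjoint (↑(Finset.univ : Finset (Fin j))) (C v) :=
      fun v t _ t' _ hne => hCdisj v v t t' (Or.inl hne)
    have hBsum : ∀ v : Fin j, ∑ x ∈ B v, x ^ m
        = ∑ r ∈ Finset.range (m + 1), ∑ t : Fin j,
            (∑ a ∈ A (v + t), a ^ r) * (((t : ℕ) : ℤ) * N) ^ (m - r) * (m.choose r) := by
      intro v
      rw [hB]
      calc ∑ x ∈ Finset.univ.biUnion (C v), x ^ m
          = ∑ t : Fin j, ∑ x ∈ C v t, x ^ m := Finset.sum_biUnion (hPW v)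
        _ = ∑ t : Fin j, ∑ a ∈ A (v + t), (a + ((t : ℕ) : ℤ) * N) ^ m := by
            refine Finset.sum_congr rfl fun t _ => ?_
            rw [hC]
            exact Finset.sum_image (fun a _ b _ hab => add_left_injective _ hab)
        _ = ∑ t : Fin j, ∑ r ∈ Finset.range (m + 1),
              (∑ a ∈ A (v + t), a ^ r) * (((t : ℕ) : ℤ) * N) ^ (m - r) * (m.choose r) := by
            refine Finset.sum_congr rfl fun t _ => ?_
            simp only [add_pow]
            rw [Finset.sum_comm]
            simp only [Finset.sum_mul]
        _ = ∑ r ∈ Finset.range (m + 1), ∑ t : Fin j,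
              (∑ a ∈ A (v + t), a ^ r) * (((t : ℕ) : ℤ) * N) ^ (m - r) * (m.choose r) :=
            Finset.sum_comm
    rw [hBsum v, hBsum w]
    refine Finset.sum_congr rfl fun r hr => ?_
    have hrm : r ≤ m := by
      have := Finset.mem_range.1 hr
      omega
    by_cases hcase : r = m
    · subst hcase
      simp only [Nat.sub_self, pow_zero, mul_one, Nat.choose_self, Nat.cast_one]
      have reidx : ∀ v : Fin j, (∑ t : Fin j, ∑ a ∈ A (v + t), a ^ r)
          = ∑ u : Fin j, ∑ a ∈ A u, a ^ r := fun v =>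
        Fintype.sum_equiv (Equiv.addLeft v) _ _ (fun t => rfl)
      rw [reidx v, reidx w]
    · have hr' : r < m := lt_of_le_of_ne hrm hcase
      refine Finset.sum_congr rfl fun t _ => ?_
      have key : ∑ a ∈ A (v + t), a ^ r = ∑ a ∈ A (w + t), a ^ r := by
        rcases Nat.eq_zero_or_pos r with rfl | hrpos
        · simp [hcard]
        · exact hsum r hrpos (by omega) _ _
      rw [key]

/-- For any integers `j ≥ 2` and `k ≥ 1`, `N(k, j) ≤ 2 * j ^ k`: there is a positive
integer `N ≤ 2 * j ^ k` such that `{1, …, N}` admits a multigrade partition into `j`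
sets of degree `k`. -/
theorem least_multigrade_N_le_two_j_pow_k (j k : ℕ) (hj : 2 ≤ j) (hk : 1 ≤ k) :
    ∃ N : ℕ, 0 < N ∧ N ≤ 2 * j ^ k ∧ IsMultigradePartitionable k j N := by
  have main : ∀ k : ℕ, 1 ≤ k → IsMultigradePartitionable k j (2 * j ^ k) := by
    intro k hk
    induction k, hk using Nat.le_induction with
    | base => simpa [pow_one] using mgp_base j hj
    | succ n hn ih =>
      have hpos : 0 < 2 * j ^ n := by positivity
      have := mgp_step j n (2 * j ^ n) hj hpos ih
      have heq : j * (2 * j ^ n) = 2 * j ^ (n + 1) := by ring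
      rwa [heq] at this
  exact ⟨2 * j ^ k, by positivity, le_refl _, main k hk⟩
end

section
/- N(2, 2) = 8: the set {1, 2, …, 8} can be partitioned into 2 disjoint sets of 4 integers each having equal sums and equal sums of squares, while no positive integer N < 8 admits a partition of {1, 2, …, N} into 2 disjoint sets of equal cardinality N/2 having equal sums and equal sums of squares. -/
/-- `N(2, 2) = 8`: the set `{1, …, 8}` can be partitioned into `2` disjoint sets of `4`
integers with equal sums and equal sums of squares, while no positive `N < 8` admits
such a partition of `{1, …, N}` into `2` sets of equal cardinality. -/
theorem least_multigrade_N_two_two :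
    IsMultigradePartitionable 2 2 8 ∧
      ∀ N : ℕ, 0 < N → N < 8 → ¬ IsMultigradePartitionable 2 2 N := by
  constructor
  · refine ⟨4, rfl, ![{1,4,6,7}, {2,3,5,8}], ?_, ?_, ?_, ?_⟩
    · decide
    · decide
    · decide
    · intro r hr1 hr2
      interval_cases r <;> decide
  · rintro N hN hlt ⟨s, hNs, A, hdisj, hcard, hcover, hsums⟩
    subst hNs
    have hs : s = 1 ∨ s = 2 ∨ s = 3 := by omega
    have key : ∀ r : ℕ, 1 ≤ r → r ≤ 2 →
        ∑ x ∈ Finset.Icc (1 : ℤ) ((2 * s : ℕ) : ℤ), x ^ r = 2 * ∑ x ∈ A 0, x ^ r := by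
      intro r hr1 hr2
      rw [← hcover, Finset.sum_biUnion (fun v _ w _ h => hdisj v w h),
        Fin.sum_univ_two, hsums r hr1 hr2 1 0]
      ring
    rcases hs with h | h | h <;> subst h
    · have h1 := key 1 le_rfl (by norm_num)
      have e : ∑ x ∈ Finset.Icc (1 : ℤ) 2, x = 3 := by decide
      norm_num [e] at h1
      omega
    · have h1 := key 1 le_rfl (by norm_num)
      have h2 := key 2 (by norm_num) le_rfl
      have e1 : ∑ x ∈ Finset.Icc (1 : ℤ) 4, x = 10 := by decide
      have e2 : ∑ x ∈ Finset.Icc (1 : ℤ) 4, x ^ 2 = 30 := by decide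
      norm_num [e1] at h1
      norm_num [e2] at h2
      have hsub : A 0 ⊆ Finset.Icc (1 : ℤ) 4 := by
        intro x hx
        have : x ∈ Finset.univ.biUnion A := Finset.mem_biUnion.2 ⟨0, Finset.mem_univ _, hx⟩
        rw [hcover] at this; norm_num at this ⊢; exact this
      have hc0 : (A 0).card = 2 := hcard 0
      have chk : ∀ B ∈ (Finset.Icc (1 : ℤ) 4).powerset, B.card = 2 →
          ∑ x ∈ B, x ^ 1 = 5 → ∑ x ∈ B, x ^ 2 ≠ 15 := by decide
      have hx1 : ∑ x ∈ A 0, x ^ 1 = 5 := by simpa [pow_one] using by omega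
      exact chk (A 0) (Finset.mem_powerset.2 hsub) hc0 hx1 (by omega)
    · have h1 := key 1 le_rfl (by norm_num)
      have e : ∑ x ∈ Finset.Icc (1 : ℤ) 6, x = 21 := by decide
      norm_num [e] at h1
      omega
end

section
/- N(2, 3) = 18: the set {1, 2, …, 18} can be partitioned into 3 pairwise disjoint sets of 6 integers each having equal sums and equal sums of squares, while no positive integer N < 18 admits a partition of {1, 2, …, N} into 3 pairwise disjoint sets of equal cardinality N/3 having equal sums and equal sums of squares. -/
set_option maxRecDepth 10000


/-- `N(2, 3) = 18`: the set `{1, …, 18}` can be partitioned into `3` pairwise disjoint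
sets of `6` integers with equal sums and equal sums of squares, while no positive
`N < 18` admits such a partition of `{1, …, N}` into `3` sets of equal cardinality. -/
theorem least_multigrade_N_two_three :
    IsMultigradePartitionable 2 3 18 ∧
      ∀ N : ℕ, 0 < N → N < 18 → ¬ IsMultigradePartitionable 2 3 N := by
  constructor
  · refine ⟨6, by norm_num, ![{1,4,11,12,14,15}, {2,5,9,10,13,18}, {3,6,7,8,16,17}], ?_, ?_, ?_, ?_⟩
    · decide
    · decide
    · decide
    · intro r hr hr' v w
      interval_cases r <;> fin_cases v <;> fin_cases w <;> decide
  · rintro N hN hN' ⟨s, rfl, A, hdisj, hcard, hunion, hsums⟩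
    have keyr : ∀ r : ℕ, 1 ≤ r → r ≤ 2 →
        (3 : ℤ) * ∑ x ∈ A 0, x ^ r = ∑ x ∈ Finset.Icc (1:ℤ) ((3*s : ℕ) : ℤ), x ^ r := by
      intro r hr hr'
      rw [← hunion, Finset.sum_biUnion (fun v _ w _ hvw => hdisj v w hvw)]
      have h : ∀ v : Fin 3, ∑ x ∈ A v, x ^ r = ∑ x ∈ A 0, x ^ r := fun v =>
        hsums r hr hr' v 0
      rw [Fin.sum_univ_three, h 1, h 2]; ring
    have hdvd : (3:ℤ) ∣ ∑ x ∈ Finset.Icc (1:ℤ) ((3*s : ℕ) : ℤ), x ^ 2 :=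
      ⟨_, (keyr 2 one_le_two le_rfl).symm⟩
    have h1 : 1 ≤ s := by omega
    have h2 : s ≤ 5 := by omega
    interval_cases s
    · exact absurd hdvd (by decide)
    · exact absurd hdvd (by decide)
    · -- s = 3, N = 9
      have hsub : A 0 ⊆ Finset.Icc (1:ℤ) 9 := by
        intro x hx
        have : x ∈ Finset.univ.biUnion A := Finset.mem_biUnion.2 ⟨0, Finset.mem_univ _, hx⟩
        rw [hunion] at this; norm_num at this ⊢; exact this
      have key1 : (3 : ℤ) * ∑ x ∈ A 0, x ^ 1 = 45 := by
        rw [keyr 1 le_rfl one_le_two]; decide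
      have key2 : (3 : ℤ) * ∑ x ∈ A 0, x ^ 2 = 285 := by
        rw [keyr 2 one_le_two le_rfl]; decide
      have sum1 : ∑ x ∈ A 0, x = 15 := by
        have : ∑ x ∈ A 0, x ^ 1 = ∑ x ∈ A 0, x := by simp
        omega
      have sum2 : ∑ x ∈ A 0, x ^ 2 = 95 := by omega
      exact (by decide : ∀ B ∈ (Finset.Icc (1:ℤ) 9).powerset,
          ¬(B.card = 3 ∧ ∑ x ∈ B, x = 15 ∧ ∑ x ∈ B, x ^ 2 = 95))
        (A 0) (Finset.mem_powerset.2 hsub) ⟨hcard 0, sum1, sum2⟩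
    · exact absurd hdvd (by decide)
    · exact absurd hdvd (by decide)
end
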